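/- arXiv:1606.01013 — 13 statements merged into one kernel-verified Lean document; each statement's English description precedes it below -/
import Mathlib

section
/- If X is a Tychonoff space and {U_n : n ∈ ω} is a sequence of open subsets of C_p(X) (the space of continuous real-valued functions on X with the topology of pointwise convergence) such that the zero function 0 lies in the closure of each U_n, then for every sequence {W_n : n ∈ ω} where each W_n is an open cover of U_n, one can choose W_n ∈ W_n for each n such that 0 lies in the closure of the union ⋃_{n∈ω} W_n. -/
open Topology Filter

/-- `Cp X` : continuous real-valued functions on `X` with the topology of
pointwise convergence (subspace of the product `X → ℝ`). -/
abbrev Cp (X : Type*) [TopologicalSpace X] : Type _ := {f : X → ℝ // Continuous f}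

noncomputable instance {X : Type*} [TopologicalSpace X] : Zero (Cp X) :=
  ⟨⟨fun _ => 0, continuous_const⟩⟩

/-- Every open set in `Cp X` around a point contains a "finite box":
there is a finite set `G` and positive radii `ε` such that any continuous
function `ε`-close to `f` on `G` lies in the open set. -/
theorem cp_box {X : Type*} [TopologicalSpace X] {w : Set (Cp X)} (hw : IsOpen w)
    {f : Cp X} (hf : f ∈ w) :
    ∃ G : Finset X, ∃ ε : X → ℝ, (∀ x, 0 < ε x) ∧
      ∀ h : Cp X, (∀ x ∈ G, |h.1 x - f.1 x| < ε x) → h ∈ w := by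
  have hmem : w ∈ 𝓝 f := hw.mem_nhds hf
  rw [(Topology.IsEmbedding.subtypeVal (p := fun g : X → ℝ => Continuous g)).isInducing.nhds_eq_comap, Filter.mem_comap] at hmem
  obtain ⟨S, hS, hSsub⟩ := hmem
  rw [nhds_pi, Filter.mem_pi] at hS
  obtain ⟨I, hIfin, t, ht, hsub⟩ := hS
  choose ε hε using fun i => Metric.mem_nhds_iff.1 (ht i)
  refine ⟨hIfin.toFinset, ε, fun i => (hε i).1, fun h hh => ?_⟩
  apply hSsub
  have : h.1 ∈ I.pi t := by
    intro i hi
    apply (hε i).2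
    rw [Metric.mem_ball, Real.dist_eq]
    exact hh i (hIfin.mem_toFinset.2 hi)
  exact hsub this

/-- Tychonoff separation of two disjoint finite sets by a continuous function. -/
theorem cp_sep {X : Type*} [TopologicalSpace X] [T35Space X] (A B : Finset X)
    (hAB : ∀ x ∈ B, x ∉ A) :
    ∃ ψ : X → ℝ, Continuous ψ ∧ (∀ x ∈ A, ψ x = 1) ∧ (∀ x ∈ B, ψ x = 0) := by
  classical
  have hA : IsClosed (A : Set X) := (A : Set X).toFinite.isClosed
  choose φ hφc hφ0 hφ1 using fun b : B =>
    CompletelyRegularSpace.completely_regular (X := X) b.1 (A : Set X) hA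
      (by simpa using hAB b.1 b.2)
  refine ⟨fun x => ∏ b ∈ B.attach, ((φ b x : ℝ)), ?_, ?_, ?_⟩
  · exact continuous_finset_prod _ fun b _ => continuous_subtype_val.comp (hφc b)
  · intro x hx
    show ∏ b ∈ B.attach, ((φ b x : ℝ)) = 1
    apply Finset.prod_eq_one
    intro b _
    have := hφ1 b (show x ∈ (A : Set X) from by simpa using hx)
    simp only [Pi.one_apply] at this
    simp [this]
  · intro x hx
    apply Finset.prod_eq_zero (Finset.mem_attach B ⟨x, hx⟩)
    simp [hφ0 ⟨x, hx⟩]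

theorem stmt0 {X : Type*} [TopologicalSpace X] [T35Space X]
    (U : ℕ → Set (Cp X)) (hUopen : ∀ n, IsOpen (U n))
    (h0 : ∀ n, (0 : Cp X) ∈ closure (U n))
    (W : ℕ → Set (Set (Cp X)))
    (hWopen : ∀ n, ∀ V ∈ W n, IsOpen V)
    (hWcover : ∀ n, U n ⊆ ⋃₀ W n) :
    ∃ w : ℕ → Set (Cp X), (∀ n, w n ∈ W n) ∧ (0 : Cp X) ∈ closure (⋃ n, w n) := by
  classical
  -- the one-step choice
  have hstep : ∀ (P : Finset X) (n : ℕ), ∃ f : Cp X, ∃ w : Set (Cp X), ∃ G : Finset X,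
      (∀ x ∈ P, |f.1 x| < 1 / (n + 1)) ∧ w ∈ W n ∧
      ∀ h : Cp X, (∀ x ∈ G, h.1 x = f.1 x) → h ∈ w := by
    intro P n
    have hσ : (0 : ℝ) < 1 / (n + 1) := by positivity
    -- the basic nbhd of 0 determined by P and σ
    set V : Set (Cp X) := ⋂ x ∈ P, {f : Cp X | |f.1 x| < 1 / (n + 1)} with hV
    have hVopen : IsOpen V := by
      apply isOpen_biInter_finset
      intro x _
      have hc : Continuous fun f : Cp X => f.1 x :=
        (continuous_apply x).comp continuous_subtype_val
      have : {f : Cp X | |f.1 x| < 1 / (n + 1)} =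
          (fun f : Cp X => f.1 x) ⁻¹' (Metric.ball 0 (1 / (n + 1))) := by
        ext f
        simp [Real.dist_eq]
      rw [this]
      exact hc.isOpen_preimage _ Metric.isOpen_ball
    have h0V : (0 : Cp X) ∈ V := by
      rw [hV]
      refine Set.mem_iInter₂.2 fun x _ => ?_
      show |(0 : ℝ)| < 1 / (n + 1)
      simpa using hσ
    obtain ⟨f, hfV, hfU⟩ := mem_closure_iff.1 (h0 n) V hVopen h0V
    obtain ⟨w, hwW, hfw⟩ := hWcover n hfU
    obtain ⟨G, ε, hεpos, hG⟩ := cp_box (hWopen n w hwW) hfw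
    refine ⟨f, w, G, ?_, hwW, ?_⟩
    · intro x hx
      have := Set.mem_iInter.1 hfV x
      simpa using Set.mem_iInter.1 (Set.mem_iInter.1 hfV x) hx
    · intro h hh
      apply hG
      intro x hx
      rw [hh x hx]
      simpa using hεpos x
  choose F ws G hsmall hwmem hagree using hstep
  -- the accumulated finite sets
  let P : ℕ → Finset X := fun n => Nat.rec ∅ (fun m Pm => Pm ∪ G Pm m) n
  have hPsucc : ∀ n, P (n + 1) = P n ∪ G (P n) n := fun n => rfl
  have hPmono : ∀ {m n : ℕ}, m ≤ n → P m ⊆ P n := by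
    intro m n h
    induction h with
    | refl => exact subset_rfl
    | step h ih =>
      rename_i k hk
      exact ih.trans (by rw [hPsucc]; exact Finset.subset_union_left)
  refine ⟨fun n => ws (P n) n, fun n => hwmem _ _, ?_⟩
  rw [mem_closure_iff]
  intro O hO h0O
  obtain ⟨I, ε, hεpos, hI⟩ := cp_box hO h0O
  -- a uniform lower bound for ε on I
  obtain ⟨ε0, hε0pos, hε0le⟩ : ∃ e : ℝ, 0 < e ∧ ∀ x ∈ I, e ≤ ε x := by
    rcases I.eq_empty_or_nonempty with h | h
    · exact ⟨1, one_pos, by simp [h]⟩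
    · obtain ⟨x0, hx0, hmin⟩ := I.exists_min_image ε h
      exact ⟨ε x0, hεpos x0, hmin⟩
  -- each point is "new" for at most one stage
  have hbad : ∀ x : X, ∃ N : ℕ, ∀ n, N ≤ n → x ∈ G (P n) n → x ∈ P n := by
    intro x
    rcases Classical.em (∃ m, x ∈ G (P m) m ∧ x ∉ P m) with hx | hx
    · obtain ⟨m, hmG, _⟩ := hx
      refine ⟨m + 1, fun n hn _ => ?_⟩
      exact hPmono hn (by rw [hPsucc]; exact Finset.mem_union_right _ hmG)
    · push_neg at hx
      exact ⟨0, fun n _ hG => hx n hG⟩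
  choose Nf hNf using hbad
  -- pick a suitable stage n
  obtain ⟨k, hk⟩ := exists_nat_gt (1 / ε0)
  set n : ℕ := max (I.sup Nf) k with hn
  have hsmalln : (1 : ℝ) / (n + 1) < ε0 := by
    rw [div_lt_iff₀ (by positivity)]
    have h1 : 1 / ε0 < (k : ℝ) := hk
    have h2 : (k : ℝ) ≤ n := by exact_mod_cast le_max_right _ _
    have h3 : 1 / ε0 < (n : ℝ) + 1 := by linarith
    calc (1 : ℝ) = ε0 * (1 / ε0) := by field_simp
    _ < ε0 * ((n : ℝ) + 1) := by
        exact mul_lt_mul_of_pos_left h3 hε0pos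
  have hIn : ∀ x ∈ I, x ∈ G (P n) n → x ∈ P n := by
    intro x hx hG
    exact hNf x n (le_trans (Finset.le_sup hx) (le_max_left _ _)) hG
  -- the separating bump
  obtain ⟨ψ, hψc, hψ1, hψ0⟩ := cp_sep (G (P n) n) (I \ G (P n) n)
    (fun x hx => (Finset.mem_sdiff.1 hx).2)
  set f : Cp X := F (P n) n with hf
  set h : Cp X := ⟨fun x => f.1 x * ψ x, f.2.mul hψc⟩ with hh
  have hhw : h ∈ ws (P n) n := by
    apply hagree
    intro x hx
    simp only [hh]
    rw [hψ1 x hx, mul_one]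
  have hhO : h ∈ O := by
    apply hI
    intro x hx
    have h0x : (0 : Cp X).1 x = 0 := rfl
    rw [h0x, sub_zero]
    by_cases hxG : x ∈ G (P n) n
    · have hxP : x ∈ P n := hIn x hx hxG
      have : |f.1 x| < 1 / (n + 1) := hsmall (P n) n x hxP
      have hψx : ψ x = 1 := hψ1 x hxG
      simp only [hh, hψx, mul_one]
      calc |f.1 x| < 1 / (n + 1) := this
      _ < ε0 := hsmalln
      _ ≤ ε x := hε0le x hx
    · have hψx : ψ x = 0 := hψ0 x (Finset.mem_sdiff.2 ⟨hx, hxG⟩)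
      simp only [hh, hψx, mul_zero, abs_zero]
      exact lt_of_lt_of_le hε0pos (hε0le x hx)
  exact ⟨h, hhO, Set.mem_iUnion.2 ⟨n, hhw⟩⟩
end

section
/- Let X be a Tychonoff space such that C_p(X) is an Ascoli space, and let {U_n : n ∈ ω} be a sequence of open subsets of C_p(X) such that 0 lies in the closure of ⋃_n U_n but 0 does not lie in the closure of any individual U_n. Then there exists a compact subspace K of C_p(X) such that the set {n : K ∩ U_n ≠ ∅} is infinite. -/
open Topology Filter

/-- A space `Y` is Ascoli if every compact subset `K` of `C(Y, ℝ)` (compact-open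
topology) is evenly continuous, i.e. the evaluation map `Y × K → ℝ` is continuous. -/
def IsAscoli (Y : Type*) [TopologicalSpace Y] : Prop :=
  ∀ K : Set C(Y, ℝ), IsCompact K → Continuous fun p : Y × K => (p.2 : C(Y, ℝ)) p.1

section Aux

variable {X : Type*} [TopologicalSpace X]

lemma cp_continuous_apply (x : X) : Continuous fun f : Cp X => f.1 x :=
  (continuous_apply x).comp continuous_subtype_val

/-- Basic neighborhoods in `Cp X` : finite sets of coordinates and an `ε`. -/
lemma cp_nhds_basis (f : Cp X) {V : Set (Cp X)} (hV : V ∈ 𝓝 f) :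
    ∃ (A : Finset X) (δ : ℝ), 0 < δ ∧
      ∀ h : Cp X, (∀ x ∈ A, |h.1 x - f.1 x| < δ) → h ∈ V := by
  obtain ⟨O, hOV, hO, hfO⟩ := mem_nhds_iff.mp hV
  rw [isOpen_induced_iff] at hO
  obtain ⟨O', hO', rfl⟩ := hO
  obtain ⟨I, u, hu, hsub⟩ := isOpen_pi_iff.mp hO' f.1 hfO
  have hd : ∀ x : X, ∃ δ : ℝ, 0 < δ ∧ (x ∈ I → Metric.ball (f.1 x) δ ⊆ u x) := by
    intro x
    by_cases hx : x ∈ I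
    · obtain ⟨δ, hδ, hball⟩ := Metric.isOpen_iff.mp (hu x hx).1 (f.1 x) (hu x hx).2
      exact ⟨δ, hδ, fun _ => hball⟩
    · exact ⟨1, one_pos, fun h => absurd h hx⟩
  choose d hd0 hdball using hd
  by_cases hI : I.Nonempty
  · refine ⟨I, I.inf' hI d, ?_, ?_⟩
    · exact (Finset.lt_inf'_iff hI).mpr fun x _ => hd0 x
    · intro h hh
      apply hOV
      show h.1 ∈ O'
      apply hsub
      intro x hx
      apply hdball x hx
      rw [Metric.mem_ball, Real.dist_eq]
      exact lt_of_lt_of_le (hh x hx) (Finset.inf'_le _ hx)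
  · refine ⟨I, 1, one_pos, fun h _ => hOV ?_⟩
    show h.1 ∈ O'
    apply hsub
    intro x hx
    exact absurd ⟨x, hx⟩ hI

/-- Finite interpolation in a Tychonoff space. -/
lemma cp_interpolate [T35Space X] (D : Finset X) (v : X → ℝ) :
    ∃ h : Cp X, ∀ x ∈ D, h.1 x = v x := by
  classical
  have key : ∀ a : X, ∃ φ : X → ℝ, Continuous φ ∧
      (a ∈ D → φ a = 1 ∧ ∀ b ∈ D, b ≠ a → φ b = 0) := by
    intro a
    by_cases ha : a ∈ D
    · have hcl : IsClosed (↑(D.erase a) : Set X) := (D.erase a).finite_toSet.isClosed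
      have hna : a ∉ (↑(D.erase a) : Set X) := by simp
      obtain ⟨f, hf, hfa, hfK⟩ := CompletelyRegularSpace.completely_regular a _ hcl hna
      refine ⟨fun x => 1 - (f x : ℝ), continuous_const.sub (continuous_subtype_val.comp hf),
        fun _ => ⟨by simp [hfa], ?_⟩⟩
      intro b hb hba
      have hb' : b ∈ (↑(D.erase a) : Set X) := by simp [hb, hba]
      have : f b = 1 := hfK hb'
      simp [this]
    · exact ⟨0, continuous_const, fun h => absurd h ha⟩
  choose φ hφc hφ using key
  refine ⟨⟨fun x => ∑ a ∈ D, v a * φ a x,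
    continuous_finset_sum _ fun a _ => continuous_const.mul (hφc a)⟩, ?_⟩
  intro b hb
  show (∑ a ∈ D, v a * φ a b) = v b
  have hz : ∀ a ∈ D, a ≠ b → v a * φ a b = 0 := by
    intro a ha hab
    rw [(hφ a ha).2 b hb (Ne.symm hab), mul_zero]
  rw [Finset.sum_eq_single_of_mem b hb hz, (hφ b hb).1, mul_one]

end Aux

theorem stmt1 {X : Type*} [TopologicalSpace X] [T35Space X]
    (hAscoli : IsAscoli (Cp X))
    (U : ℕ → Set (Cp X)) (hUopen : ∀ n, IsOpen (U n))
    (h0 : (0 : Cp X) ∈ closure (⋃ n, U n))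
    (h0n : ∀ n, (0 : Cp X) ∉ closure (U n)) :
    ∃ K : Set (Cp X), IsCompact K ∧ {n : ℕ | (K ∩ U n).Nonempty}.Infinite := by
  classical
  by_contra hcon
  push_neg at hcon
  -- `0` is in the closure of every tail union
  have htail : ∀ M : ℕ, (0 : Cp X) ∈ closure (⋃ n ∈ Set.Ici M, U n) := by
    intro M
    have hsplit : (⋃ n, U n) ⊆ (⋃ n ∈ Finset.range M, U n) ∪ ⋃ n ∈ Set.Ici M, U n := by
      intro f hf
      obtain ⟨n, hn⟩ := Set.mem_iUnion.mp hf
      rcases lt_or_ge n M with h | h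
      · exact Or.inl (Set.mem_biUnion (Finset.mem_range.mpr h) hn)
      · exact Or.inr (Set.mem_biUnion h hn)
    have hmem := (closure_mono hsplit) h0
    rw [closure_union] at hmem
    rcases hmem with hmem | hmem
    · exfalso
      rw [Finset.closure_biUnion] at hmem
      obtain ⟨n, -, hn⟩ := Set.mem_iUnion₂.mp hmem
      exact h0n n hn
    · exact hmem
  have hpow : ∀ j : ℕ, (0 : ℝ) < (1/2)^j := fun j => by positivity
  -- the recursive step
  have hstep : ∀ (M : ℕ) (B : Finset X) (η : ℝ), 0 < η →
      ∃ (n : ℕ) (A : Finset X) (δ : ℝ) (g : Cp X),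
        M ≤ n ∧ B ⊆ A ∧ 0 < δ ∧ (∀ x ∈ B, |g.1 x| < η) ∧
        ∀ f : Cp X, (∀ x ∈ A, |f.1 x - g.1 x| < δ) → f ∈ U n := by
    intro M B η hη
    have hopen : IsOpen {f : Cp X | ∀ x ∈ B, |f.1 x| < η} := by
      have heq : {f : Cp X | ∀ x ∈ B, |f.1 x| < η} = ⋂ x ∈ B, {f : Cp X | |f.1 x| < η} := by
        ext f; simp
      rw [heq]
      refine isOpen_biInter_finset fun x _ => ?_
      exact isOpen_Iio.preimage (continuous_abs.comp (cp_continuous_apply x))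
    have h0mem : (0 : Cp X) ∈ {f : Cp X | ∀ x ∈ B, |f.1 x| < η} := by
      intro x _
      show |((0 : Cp X)).1 x| < η
      have h00 : ((0 : Cp X)).1 x = 0 := rfl
      rw [h00, abs_zero]
      exact hη
    obtain ⟨g, hgB, hgU⟩ := mem_closure_iff.mp (htail M) _ hopen h0mem
    obtain ⟨n, hn, hgn⟩ := Set.mem_iUnion₂.mp hgU
    obtain ⟨A', δ, hδ, hbox⟩ := cp_nhds_basis g ((hUopen n).mem_nhds hgn)
    refine ⟨n, A' ∪ B, δ, g, hn, Finset.subset_union_right, hδ, hgB, ?_⟩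
    intro f hf
    exact hbox f fun x hx => hf x (Finset.mem_union_left _ hx)
  choose nn AA dd gg hstepN hstepsub hstepd hstepsmall hstepbox using hstep
  -- build the recursive sequence
  let step : ℕ → ℕ × Finset X × ℝ × Cp X → ℕ × Finset X × ℝ × Cp X := fun j t =>
    (nn (t.1+1) t.2.1 ((1/2)^(j+1)) (hpow (j+1)),
     AA (t.1+1) t.2.1 ((1/2)^(j+1)) (hpow (j+1)),
     dd (t.1+1) t.2.1 ((1/2)^(j+1)) (hpow (j+1)),
     gg (t.1+1) t.2.1 ((1/2)^(j+1)) (hpow (j+1)))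
  let seq : ℕ → ℕ × Finset X × ℝ × Cp X :=
    fun j => Nat.rec ((0, (∅ : Finset X), 1, (0 : Cp X)) : ℕ × Finset X × ℝ × Cp X) step j
  -- shifted components
  let N : ℕ → ℕ := fun j => (seq (j+1)).1
  let A : ℕ → Finset X := fun j => (seq (j+1)).2.1
  let δ : ℕ → ℝ := fun j => (seq (j+1)).2.2.1
  let g : ℕ → Cp X := fun j => (seq (j+1)).2.2.2
  have hseq : ∀ j, seq (j+1) = step j (seq j) := fun j => rfl
  have hNlt : ∀ j, N j < N (j+1) := by
    intro j
    have h1 := hstepN ((seq (j+1)).1 + 1) (seq (j+1)).2.1 ((1/2)^(j+2)) (hpow (j+2))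
    have h2 : N (j+1) = nn ((seq (j+1)).1 + 1) (seq (j+1)).2.1 ((1/2)^(j+2)) (hpow (j+2)) := rfl
    rw [h2]
    exact Nat.lt_of_succ_le h1
  have hNmono : StrictMono N := strictMono_nat_of_lt_succ hNlt
  have hAsub : ∀ j, A j ⊆ A (j+1) := by
    intro j
    have h1 := hstepsub ((seq (j+1)).1 + 1) (seq (j+1)).2.1 ((1/2)^(j+2)) (hpow (j+2))
    exact h1
  have hAmono : ∀ i j, i ≤ j → A i ⊆ A j := by
    intro i j hij
    induction j with
    | zero => rw [Nat.le_zero.mp hij]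
    | succ j ih =>
      rcases Nat.lt_or_ge i (j+1) with h | h
      · exact (ih (Nat.lt_succ_iff.mp h)).trans (hAsub j)
      · rw [Nat.le_antisymm hij h]
  have hdpos : ∀ j, 0 < δ j := by
    intro j
    cases j with
    | zero => exact hstepd ((seq 0).1 + 1) (seq 0).2.1 ((1/2)^1) (hpow 1)
    | succ j => exact hstepd ((seq (j+1)).1 + 1) (seq (j+1)).2.1 ((1/2)^(j+2)) (hpow (j+2))
  have hsmall : ∀ j, ∀ x ∈ A j, |(g (j+1)).1 x| < (1/2)^(j+1) := by
    intro j x hx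
    have h1 := hstepsmall ((seq (j+1)).1 + 1) (seq (j+1)).2.1 ((1/2)^(j+2)) (hpow (j+2)) x hx
    calc |(g (j+1)).1 x| < (1/2)^(j+2) := h1
    _ ≤ (1/2)^(j+1) := by
        apply pow_le_pow_of_le_one (by norm_num) (by norm_num)
        omega
  have hbox : ∀ j, ∀ f : Cp X, (∀ x ∈ A j, |f.1 x - (g j).1 x| < δ j) → f ∈ U (N j) := by
    intro j
    cases j with
    | zero => exact hstepbox ((seq 0).1 + 1) (seq 0).2.1 ((1/2)^1) (hpow 1)
    | succ j => exact hstepbox ((seq (j+1)).1 + 1) (seq (j+1)).2.1 ((1/2)^(j+2)) (hpow (j+2))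
  -- the bump functions
  have hGcont : ∀ j : ℕ, Continuous fun f : Cp X =>
      max 0 (1 - (δ j)⁻¹ * ∑ x ∈ A j, |f.1 x - (g j).1 x|) := by
    intro j
    apply continuous_const.max
    apply continuous_const.sub
    apply continuous_const.mul
    exact continuous_finset_sum _ fun x _ => ((cp_continuous_apply x).sub continuous_const).abs
  let G : ℕ → C(Cp X, ℝ) := fun j =>
    ⟨fun f => max 0 (1 - (δ j)⁻¹ * ∑ x ∈ A j, |f.1 x - (g j).1 x|), hGcont j⟩
  have hGapp : ∀ j f, G j f = max 0 (1 - (δ j)⁻¹ * ∑ x ∈ A j, |f.1 x - (g j).1 x|) :=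
    fun j f => rfl
  have hGnonneg : ∀ j f, 0 ≤ G j f := fun j f => le_max_left _ _
  -- positivity of the bump forces membership in U (N j)
  have hGsupp : ∀ j (f : Cp X), 0 < G j f → f ∈ U (N j) := by
    intro j f hf
    rw [hGapp] at hf
    have h1 : (δ j)⁻¹ * ∑ x ∈ A j, |f.1 x - (g j).1 x| < 1 := by
      by_contra hle
      push_neg at hle
      have : 1 - (δ j)⁻¹ * ∑ x ∈ A j, |f.1 x - (g j).1 x| ≤ 0 := by linarith
      rw [max_eq_left this] at hf
      exact lt_irrefl _ hf
    have hsum : (∑ x ∈ A j, |f.1 x - (g j).1 x|) < δ j := by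
      have h2 := mul_lt_mul_of_pos_left h1 (hdpos j)
      rwa [mul_one, ← mul_assoc, mul_inv_cancel₀ (hdpos j).ne', one_mul] at h2
    apply hbox j f
    intro x hx
    calc |f.1 x - (g j).1 x| ≤ ∑ y ∈ A j, |f.1 y - (g j).1 y| :=
          Finset.single_le_sum (f := fun y => |f.1 y - (g j).1 y|) (fun y _ => abs_nonneg _) hx
    _ < δ j := hsum
  -- the bump takes value 1 at functions agreeing with g j on A j
  have hGpeak : ∀ j (f : Cp X), (∀ x ∈ A j, f.1 x = (g j).1 x) → G j f = 1 := by
    intro j f hf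
    rw [hGapp]
    have : (∑ x ∈ A j, |f.1 x - (g j).1 x|) = 0 := by
      apply Finset.sum_eq_zero
      intro x hx
      rw [hf x hx, sub_self, abs_zero]
    rw [this, mul_zero, sub_zero]
    exact max_eq_right zero_le_one
  -- G tends to 0 in the compact-open topology
  have hGtendsto : Tendsto G atTop (𝓝 (0 : C(Cp X, ℝ))) := by
    rw [ContinuousMap.tendsto_iff_forall_isCompact_tendstoUniformlyOn]
    intro C hC
    have hfin : {m : ℕ | (C ∩ U m).Nonempty}.Finite := hcon C hC
    have hprefin : {j : ℕ | N j ∈ {m : ℕ | (C ∩ U m).Nonempty}}.Finite :=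
      hfin.preimage (Set.injOn_of_injective hNmono.injective)
    have hev : ∀ᶠ j in atTop, N j ∉ {m : ℕ | (C ∩ U m).Nonempty} := by
      rw [← Nat.cofinite_eq_atTop]
      exact Set.Finite.eventually_cofinite_notMem hprefin
    intro u hu
    filter_upwards [hev] with j hj
    intro f hfC
    have hzero : G j f = 0 := by
      by_contra hne
      have hpos : 0 < G j f := lt_of_le_of_ne (hGnonneg j f) (Ne.symm hne)
      exact hj ⟨f, hfC, hGsupp j f hpos⟩
    have : ((0 : C(Cp X, ℝ)) : Cp X → ℝ) f = G j f := by
      rw [hzero]; rfl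
    rw [show ((0 : C(Cp X, ℝ)) : Cp X → ℝ) f = (G j) f from this]
    exact refl_mem_uniformity hu
  -- the compact set of functions
  have hK : IsCompact (insert (0 : C(Cp X, ℝ)) (Set.range G)) :=
    hGtendsto.isCompact_insert_range
  have heval := hAscoli _ hK
  -- evaluation continuity at (0, 0)
  set 𝒦 : Set C(Cp X, ℝ) := insert (0 : C(Cp X, ℝ)) (Set.range G) with h𝒦
  have h0K : (0 : C(Cp X, ℝ)) ∈ 𝒦 := Set.mem_insert _ _
  have hGK : ∀ j, G j ∈ 𝒦 := fun j => Set.mem_insert_of_mem _ (Set.mem_range_self j)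
  have hevalat : (fun p : Cp X × 𝒦 => (p.2 : C(Cp X, ℝ)) p.1) ⁻¹' Set.Iio 1 ∈
      𝓝 ((0 : Cp X), (⟨0, h0K⟩ : 𝒦)) := by
    apply heval.continuousAt.preimage_mem_nhds
    have : ((⟨0, h0K⟩ : 𝒦) : C(Cp X, ℝ)) (0 : Cp X) = 0 := rfl
    rw [this]
    exact Iio_mem_nhds one_pos
  rw [mem_nhds_prod_iff] at hevalat
  obtain ⟨V, hV, W, hW, hVW⟩ := hevalat
  -- V contains a basic box
  obtain ⟨B, ε, hε, hball⟩ := cp_nhds_basis 0 hV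
  -- eventually G j ∈ W
  have hGsub : Tendsto (fun j => (⟨G j, hGK j⟩ : 𝒦)) atTop (𝓝 ⟨0, h0K⟩) :=
    tendsto_subtype_rng.mpr hGtendsto
  have hWev : ∀ᶠ j in atTop, (⟨G j, hGK j⟩ : 𝒦) ∈ W := hGsub hW
  -- a bound j₀ for the trace of B on the A j's
  have hj0 : ∃ j₀ : ℕ, ∀ x ∈ B, ∀ i, x ∈ A i → x ∈ A j₀ := by
    have hx : ∀ x : X, ∃ jx : ℕ, ∀ i, x ∈ A i → x ∈ A jx := by
      intro x
      by_cases h : ∃ i, x ∈ A i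
      · obtain ⟨i, hi⟩ := h
        exact ⟨i, fun _ _ => hi⟩
      · exact ⟨0, fun i hi => absurd ⟨i, hi⟩ h⟩
    choose jx hjx using hx
    refine ⟨B.sup jx, fun x hxB i hxi => ?_⟩
    exact hAmono _ _ (Finset.le_sup hxB) (hjx x i hxi)
  obtain ⟨j₀, hj₀⟩ := hj0
  -- eventually the smallness bound beats ε
  have hpowev : ∀ᶠ j : ℕ in atTop, (1/2 : ℝ)^j < ε := by
    have h1 : Tendsto (fun j : ℕ => (1/2 : ℝ)^j) atTop (𝓝 0) :=
      tendsto_pow_atTop_nhds_zero_of_lt_one (by norm_num : (0:ℝ) ≤ 1/2)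
        (by norm_num : (1/2 : ℝ) < 1)
    exact h1.eventually (gt_mem_nhds hε)
  -- pick a suitable index
  obtain ⟨j, hjW, hjpow, hjge⟩ :=
    ((hWev.and (hpowev.and (eventually_ge_atTop (j₀ + 1)))).exists : ∃ j,
      (⟨G j, hGK j⟩ : 𝒦) ∈ W ∧ (1/2 : ℝ)^j < ε ∧ j₀ + 1 ≤ j)
  obtain ⟨j', rfl⟩ : ∃ j', j = j' + 1 := ⟨j - 1, by omega⟩
  -- interpolate: h = g (j'+1) on A (j'+1), h = 0 on B \ A (j'+1)
  obtain ⟨h, hh⟩ := cp_interpolate (A (j'+1) ∪ B)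
    (fun x => if x ∈ A (j'+1) then (g (j'+1)).1 x else 0)
  have hagree : ∀ x ∈ A (j'+1), h.1 x = (g (j'+1)).1 x := by
    intro x hx
    rw [hh x (Finset.mem_union_left _ hx), if_pos hx]
  have hhV : h ∈ V := by
    apply hball
    intro x hxB
    have hx0 : ((0 : Cp X)).1 x = 0 := rfl
    rw [hx0, sub_zero]
    rw [hh x (Finset.mem_union_right _ hxB)]
    by_cases hxA : x ∈ A (j'+1)
    · rw [if_pos hxA]
      have hxj0 : x ∈ A j₀ := hj₀ x hxB (j'+1) hxA
      have hxj' : x ∈ A j' := hAmono j₀ j' (by omega) hxj0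
      calc |(g (j'+1)).1 x| < (1/2)^(j'+1) := hsmall j' x hxj'
      _ < ε := hjpow
    · rw [if_neg hxA]
      simpa using hε
  have hG1 : G (j'+1) h = 1 := hGpeak (j'+1) h hagree
  have := hVW (Set.mk_mem_prod hhV hjW)
  rw [Set.mem_preimage] at this
  have hlt : ((⟨G (j'+1), hGK (j'+1)⟩ : 𝒦) : C(Cp X, ℝ)) h < 1 := this
  rw [show ((⟨G (j'+1), hGK (j'+1)⟩ : 𝒦) : C(Cp X, ℝ)) = G (j'+1) from rfl, hG1] at hlt
  exact lt_irrefl _ hlt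
end

section
/- Let X be a Tychonoff space such that C_p(X) is κ-Fréchet–Urysohn and every compact subset of C_k(C_p(X)) is first-countable. Then C_p(X) is an Ascoli space. -/
open Topology Filter

def KappaFrechetUrysohn (Z : Type*) [TopologicalSpace Z] : Prop :=
  ∀ U : Set Z, IsOpen U → ∀ z ∈ closure U,
    ∃ s : ℕ → Z, (∀ n, s n ∈ U) ∧ Filter.Tendsto s Filter.atTop (nhds z)

/-- The key step: if `Y` is κ-Fréchet–Urysohn and `K ⊆ C_k(Y)` is compact, then
for every `y₀` and `ε > 0`, the set of `y` with `|f y - f y₀| ≤ ε` for all `f ∈ K`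
is a neighborhood of `y₀` (equi-continuity of `K` at `y₀`). -/
theorem kfu_key {Y : Type*} [TopologicalSpace Y] (hkFU : KappaFrechetUrysohn Y)
    {K : Set C(Y, ℝ)} (hK : IsCompact K) (y₀ : Y) {ε : ℝ} (hε : 0 < ε) :
    {y : Y | ∀ f ∈ K, |f y - f y₀| ≤ ε} ∈ 𝓝 y₀ := by
  by_contra hM
  set M : Set Y := {y : Y | ∀ f ∈ K, |f y - f y₀| ≤ ε} with hMdef
  set U : Set Y := {y : Y | ∃ f ∈ K, ε < |f y - f y₀|} with hUdef
  have hcompl : Mᶜ = U := by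
    ext y
    simp [hMdef, hUdef, not_forall, not_le]
  have hUopen : IsOpen U := by
    have : U = ⋃ f ∈ K, {y : Y | ε < |f y - f y₀|} := by
      ext y; simp [hUdef]
    rw [this]
    exact isOpen_biUnion fun f _ =>
      isOpen_lt continuous_const ((f.continuous.sub continuous_const).abs)
  have hy₀ : y₀ ∈ closure U := by
    by_contra hc
    apply hM
    rw [← mem_interior_iff_mem_nhds]
    have : y₀ ∈ (closure Mᶜ)ᶜ := by rwa [hcompl]
    rwa [closure_compl, compl_compl] at this
  obtain ⟨s, hsU, hs⟩ := hkFU U hUopen y₀ hy₀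
  choose g hgK hgε using hsU
  -- the convergent sequence together with its limit is compact
  set L : Set Y := insert y₀ (Set.range s) with hLdef
  have hL : IsCompact L := hs.isCompact_insert_range
  haveI : CompactSpace L := isCompact_iff_compactSpace.mp hL
  -- restriction map to L
  have hρ : Continuous fun F : C(Y, ℝ) => ContinuousMap.restrict L F :=
    ContinuousMap.continuous_restrict L
  have hKL : IsCompact ((fun F : C(Y, ℝ) => ContinuousMap.restrict L F) '' K) :=
    hK.image hρ
  have hGmem : ∀ n, ContinuousMap.restrict L (g n) ∈
      (fun F : C(Y, ℝ) => ContinuousMap.restrict L F) '' K :=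
    fun n => Set.mem_image_of_mem _ (hgK n)
  obtain ⟨h, -, φ, hφ, hconv⟩ := hKL.tendsto_subseq hGmem
  -- points of L
  have hy₀L : y₀ ∈ L := Set.mem_insert _ _
  have hsL : ∀ n, s n ∈ L := fun n => Set.mem_insert_of_mem _ ⟨n, rfl⟩
  set z0 : L := ⟨y₀, hy₀L⟩ with hz0
  set zz : ℕ → L := fun n => ⟨s n, hsL n⟩ with hzzdef
  have hzzconv : Tendsto (fun j => zz (φ j)) atTop (𝓝 z0) := by
    rw [tendsto_subtype_rng]
    exact hs.comp hφ.tendsto_atTop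
  -- the distance bound tending to 0
  have hdist : Tendsto (fun j => dist (ContinuousMap.restrict L (g (φ j))) h) atTop (𝓝 0) := by
    simpa [Function.comp] using tendsto_iff_dist_tendsto_zero.mp hconv
  have hh : Tendsto (fun j => |h (zz (φ j)) - h z0|) atTop (𝓝 0) := by
    have h1 : Tendsto (fun j => h (zz (φ j))) atTop (𝓝 (h z0)) :=
      (h.continuous.tendsto z0).comp hzzconv
    have h2 : Tendsto (fun j => h (zz (φ j)) - h z0) atTop (𝓝 0) := by
      simpa using h1.sub (tendsto_const_nhds : Tendsto (fun _ : ℕ => h z0) atTop (𝓝 (h z0)))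
    simpa using h2.abs
  have hsum : Tendsto (fun j => 2 * dist (ContinuousMap.restrict L (g (φ j))) h
      + |h (zz (φ j)) - h z0|) atTop (𝓝 0) := by
    have := ((hdist.const_mul 2).add hh)
    simpa using this
  have hev : ∀ᶠ j in atTop, 2 * dist (ContinuousMap.restrict L (g (φ j))) h
      + |h (zz (φ j)) - h z0| < ε := by
    have := hsum.eventually (eventually_lt_nhds hε)
    simpa using this
  obtain ⟨j, hj⟩ := hev.exists
  -- contradiction at index j
  set G : C(L, ℝ) := ContinuousMap.restrict L (g (φ j)) with hGdef
  have e1 : |G (zz (φ j)) - h (zz (φ j))| ≤ dist G h := by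
    have := ContinuousMap.dist_apply_le_dist (f := G) (g := h) (zz (φ j))
    simpa [Real.dist_eq] using this
  have e2 : |h z0 - G z0| ≤ dist G h := by
    have := ContinuousMap.dist_apply_le_dist (f := G) (g := h) z0
    rw [Real.dist_eq] at this
    calc |h z0 - G z0| = |G z0 - h z0| := abs_sub_comm _ _
      _ ≤ dist G h := this
  have key : |G (zz (φ j)) - G z0| ≤ 2 * dist G h + |h (zz (φ j)) - h z0| := by
    have tri : |G (zz (φ j)) - G z0| ≤
        |G (zz (φ j)) - h (zz (φ j))| + |h (zz (φ j)) - h z0| + |h z0 - G z0| := by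
      have := abs_sub_le (G (zz (φ j))) (h z0) (G z0)
      have := abs_sub_le (G (zz (φ j))) (h (zz (φ j))) (h z0)
      calc |G (zz (φ j)) - G z0| ≤ |G (zz (φ j)) - h z0| + |h z0 - G z0| :=
            abs_sub_le _ _ _
        _ ≤ |G (zz (φ j)) - h (zz (φ j))| + |h (zz (φ j)) - h z0| + |h z0 - G z0| := by
            have := abs_sub_le (G (zz (φ j))) (h (zz (φ j))) (h z0)
            linarith
    linarith
  have hGval : G (zz (φ j)) = g (φ j) (s (φ j)) := rfl
  have hGval₀ : G z0 = g (φ j) y₀ := rfl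
  have hbig : ε < |G (zz (φ j)) - G z0| := by
    rw [hGval, hGval₀]
    exact hgε (φ j)
  linarith

/-- Every κ-Fréchet–Urysohn space is Ascoli. -/
theorem kfu_isAscoli {Y : Type*} [TopologicalSpace Y] (hkFU : KappaFrechetUrysohn Y) :
    IsAscoli Y := by
  intro K hK
  rw [continuous_iff_continuousAt]
  rintro ⟨y₀, f₀⟩
  rw [Metric.continuousAt_iff']
  intro ε hε
  have hε3 : 0 < ε / 3 := by linarith
  have hM : {y : Y | ∀ f ∈ K, |f y - f y₀| ≤ ε / 3} ∈ 𝓝 y₀ := kfu_key hkFU hK y₀ hε3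
  have hV : {f : K | dist ((f : C(Y, ℝ)) y₀) ((f₀ : C(Y, ℝ)) y₀) < ε / 3} ∈ 𝓝 f₀ := by
    have hcont : Continuous fun f : K => (f : C(Y, ℝ)) y₀ :=
      (continuous_eval_const y₀).comp continuous_subtype_val
    have : IsOpen {f : K | dist ((f : C(Y, ℝ)) y₀) ((f₀ : C(Y, ℝ)) y₀) < ε / 3} :=
      isOpen_lt (continuous_dist.comp (hcont.prodMk continuous_const)) continuous_const
    exact this.mem_nhds (by simp [hε3])
  have hprod : ({y : Y | ∀ f ∈ K, |f y - f y₀| ≤ ε / 3} ×ˢ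
      {f : K | dist ((f : C(Y, ℝ)) y₀) ((f₀ : C(Y, ℝ)) y₀) < ε / 3}) ∈ 𝓝 (y₀, f₀) :=
    prod_mem_nhds hM hV
  filter_upwards [hprod] with p hp
  obtain ⟨hp1, hp2⟩ := hp
  simp only [Set.mem_setOf_eq] at hp1 hp2
  have h1 : |(p.2 : C(Y, ℝ)) p.1 - (p.2 : C(Y, ℝ)) y₀| ≤ ε / 3 := hp1 _ p.2.2
  simp only [Real.dist_eq] at hp2 ⊢
  calc |(p.2 : C(Y, ℝ)) p.1 - (f₀ : C(Y, ℝ)) y₀|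
      ≤ |(p.2 : C(Y, ℝ)) p.1 - (p.2 : C(Y, ℝ)) y₀|
        + |(p.2 : C(Y, ℝ)) y₀ - (f₀ : C(Y, ℝ)) y₀| := abs_sub_le _ _ _
    _ < ε / 3 + ε / 3 := by linarith
    _ < ε := by linarith

theorem stmt3 {X : Type*} [TopologicalSpace X] [T35Space X]
    (hkFU : KappaFrechetUrysohn (Cp X))
    (hfc : ∀ K : Set C(Cp X, ℝ), IsCompact K → FirstCountableTopology K) :
    IsAscoli (Cp X) := by
  exact kfu_isAscoli hkFU
end

section
/- Every Čech-complete Tychonoff space with property (κ) is scattered. -/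
open Topology Filter

/-- A family of finite sets indexed by `ℕ` has property analogous to Sakai's (κ):
every pairwise disjoint sequence of finite subsets of `X` has a strongly
point-finite subsequence. -/
def PropertyKappa (X : Type*) [TopologicalSpace X] : Prop :=
  ∀ A : ℕ → Set X, (∀ n, (A n).Finite) →
    (Pairwise fun m n => Disjoint (A m) (A n)) →
    ∃ φ : ℕ → ℕ, StrictMono φ ∧ ∃ U : ℕ → Set X,
      (∀ n, IsOpen (U n) ∧ A (φ n) ⊆ U n) ∧ ∀ x : X, {n : ℕ | x ∈ U n}.Finite

/-- `X` is Čech-complete: it is a `Gδ` subset of some (equivalently every)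
Hausdorff compactification. -/
def CechComplete (X : Type u) [TopologicalSpace X] : Prop :=
  ∃ (Y : Type u) (_ : TopologicalSpace Y) (_ : CompactSpace Y) (_ : T2Space Y)
    (e : X → Y), IsEmbedding e ∧ Dense (Set.range e) ∧ IsGδ (Set.range e)

/-- `X` is scattered: every nonempty subset has a point isolated in it. -/
def IsScattered (X : Type*) [TopologicalSpace X] : Prop :=
  ∀ A : Set X, A.Nonempty → ∃ a ∈ A, ∃ U : Set X, IsOpen U ∧ U ∩ A = {a}

section Aux

variable {Y : Type*} [TopologicalSpace Y]

/-- The set of lists of booleans of a fixed length is finite. -/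
lemma lvl_finite (n : ℕ) : {u : List Bool | u.length = n}.Finite := by
  induction n with
  | zero =>
    have h : {u : List Bool | u.length = 0} = {([] : List Bool)} := by
      ext u; simp [List.length_eq_zero_iff]
    rw [h]; exact Set.finite_singleton _
  | succ n ih =>
    have hsub : {u : List Bool | u.length = n + 1} ⊆
        Set.image2 (· :: ·) (Set.univ : Set Bool) {u : List Bool | u.length = n} := by
      intro u hu
      match u with
      | [] => simp at hu
      | b :: w =>
        exact Set.mem_image2.mpr ⟨b, Set.mem_univ b, w, by simpa using hu, rfl⟩
    exact Set.Finite.subset (Set.finite_univ.image2 _ ih) hsub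

/-- Monotonicity of a Cantor scheme along suffixes. -/
lemma tree_mono (V : List Bool → Set Y) (hV : ∀ b u, closure (V (b :: u)) ⊆ V u) :
    ∀ s u : List Bool, s <:+ u → closure (V u) ⊆ closure (V s) := by
  intro s u hsu
  obtain ⟨q, rfl⟩ := hsu
  induction q with
  | nil => simp
  | cons b q ih =>
    rw [List.cons_append]
    exact ((hV b (q ++ s)).trans subset_closure).trans ih

/-- The key construction: a Cantor scheme in a compact Hausdorff space together
with a minimal closed set hitting all its nodes, and a family of distinct points. -/
lemma key_construction {Y : Type*} [TopologicalSpace Y] [CompactSpace Y] [T2Space Y]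
    (G : ℕ → Set Y) (hGopen : ∀ n, IsOpen (G n))
    (B : Set Y) (hB : B.Nonempty) (hBG : ∀ n, B ⊆ G n)
    (h2 : ∀ O : Set Y, IsOpen O → (O ∩ B).Nonempty →
      ∃ p ∈ O ∩ B, ∃ q ∈ O ∩ B, p ≠ q) :
    ∃ (V : List Bool → Set Y) (F : Set Y) (t : List Bool → Y),
      (∀ s, IsOpen (V s)) ∧ (∀ b u, closure (V (b :: u)) ⊆ V u) ∧
      IsClosed F ∧ (∀ n, F ⊆ G n) ∧
      (∀ u, t u ∈ F ∩ closure (V u)) ∧ Function.Injective t ∧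
      (∀ O : Set Y, IsOpen O → (O ∩ F).Nonempty →
        ∃ s, F ∩ closure (V s) ⊆ O) := by
  classical
  -- regularity shrink lemma
  have shrink : ∀ (O : Set Y) (y : Y), IsOpen O → y ∈ O →
      ∃ N : Set Y, IsOpen N ∧ y ∈ N ∧ closure N ⊆ O := by
    intro O y hO hy
    obtain ⟨s, hs, hsc, hss⟩ := exists_mem_nhds_isClosed_subset (hO.mem_nhds hy)
    refine ⟨interior s, isOpen_interior, mem_interior_iff_mem_nhds.2 hs, ?_⟩
    calc closure (interior s) ⊆ closure s := closure_mono interior_subset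
      _ = s := hsc.closure_eq
      _ ⊆ O := hss
  -- splitting step
  have childStep : ∀ (Wp : Set Y) (n : ℕ), IsOpen Wp → (Wp ∩ B).Nonempty →
      ∃ N : Bool → Set Y, (∀ b, IsOpen (N b)) ∧ (∀ b, (N b ∩ B).Nonempty) ∧
        (∀ b, closure (N b) ⊆ Wp ∩ G n) ∧
        Disjoint (closure (N false)) (closure (N true)) := by
    intro Wp n hWp hne
    obtain ⟨p, hp, q, hq, hpq⟩ := h2 Wp hWp hne
    obtain ⟨Dp, Dq, hDp, hDq, hpD, hqD, hdisj⟩ := t2_separation hpq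
    obtain ⟨Np, hNpo, hpNp, hNpc⟩ := shrink (Wp ∩ Dp ∩ G n) p
      ((hWp.inter hDp).inter (hGopen n)) ⟨⟨hp.1, hpD⟩, hBG n hp.2⟩
    obtain ⟨Nq, hNqo, hqNq, hNqc⟩ := shrink (Wp ∩ Dq ∩ G n) q
      ((hWp.inter hDq).inter (hGopen n)) ⟨⟨hq.1, hqD⟩, hBG n hq.2⟩
    refine ⟨fun b => if b then Nq else Np, ?_, ?_, ?_, ?_⟩
    · intro b; cases b
      · exact hNpo
      · exact hNqo
    · intro b; cases b
      · exact ⟨p, hpNp, hp.2⟩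
      · exact ⟨q, hqNq, hq.2⟩
    · intro b; cases b
      · exact fun y hy => ⟨(hNpc hy).1.1, (hNpc hy).2⟩
      · exact fun y hy => ⟨(hNqc hy).1.1, (hNqc hy).2⟩
    · exact hdisj.mono (fun y hy => (hNpc hy).1.2) (fun y hy => (hNqc hy).1.2)
  -- root
  obtain ⟨b0, hb0⟩ := hB
  obtain ⟨V0, hV0o, hb0V0, hV0c⟩ := shrink (G 0) b0 (hGopen 0) (hBG 0 hb0)
  have hV0ne : (V0 ∩ B).Nonempty := ⟨b0, hb0V0, hb0⟩
  -- totalized child function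
  obtain ⟨cf, hcf⟩ : ∃ cf : Set Y → ℕ → Bool → Set Y,
      ∀ (Wp : Set Y) (n : ℕ), IsOpen Wp → (Wp ∩ B).Nonempty →
        (∀ b, IsOpen (cf Wp n b)) ∧ (∀ b, (cf Wp n b ∩ B).Nonempty) ∧
        (∀ b, closure (cf Wp n b) ⊆ Wp ∩ G n) ∧
        Disjoint (closure (cf Wp n false)) (closure (cf Wp n true)) := by
    refine ⟨fun Wp n => if h : IsOpen Wp ∧ (Wp ∩ B).Nonempty then
      (childStep Wp n h.1 h.2).choose else fun _ => Wp, ?_⟩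
    intro Wp n h1 h2'
    simp only [dif_pos (And.intro h1 h2')]
    exact (childStep Wp n h1 h2').choose_spec
  -- the tree
  obtain ⟨V, hVnil, hVcons⟩ : ∃ V : List Bool → Set Y, V [] = V0 ∧
      ∀ b u, V (b :: u) = cf (V u) (u.length + 1) b :=
    ⟨fun u => List.rec V0 (fun b u ih => cf ih (u.length + 1) b) u, rfl, fun _ _ => rfl⟩
  have inv : ∀ u : List Bool, IsOpen (V u) ∧ (V u ∩ B).Nonempty ∧
      closure (V u) ⊆ G u.length := by
    intro u
    induction u with
    | nil => rw [hVnil]; exact ⟨hV0o, hV0ne, hV0c⟩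
    | cons b u ih =>
      have h := hcf (V u) (u.length + 1) ih.1 ih.2.1
      rw [hVcons]
      exact ⟨h.1 b, h.2.1 b, fun y hy => by
        simpa using ((h.2.2.1 b) hy).2⟩
  have hVo : ∀ s, IsOpen (V s) := fun s => (inv s).1
  have hVB : ∀ s, (V s ∩ B).Nonempty := fun s => (inv s).2.1
  have hVG : ∀ s, closure (V s) ⊆ G s.length := fun s => (inv s).2.2
  have hVsub : ∀ b u, closure (V (b :: u)) ⊆ V u := by
    intro b u
    rw [hVcons]
    exact fun y hy => ((hcf (V u) (u.length + 1) (hVo u) (hVB u)).2.2.1 b hy).1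
  have hsib : ∀ u, Disjoint (closure (V (false :: u))) (closure (V (true :: u))) := by
    intro u
    rw [hVcons, hVcons]
    exact (hcf (V u) (u.length + 1) (hVo u) (hVB u)).2.2.2
  have MONO := tree_mono V hVsub
  -- same-length disjointness
  have DISJ : ∀ u v : List Bool, u.length = v.length → u ≠ v →
      Disjoint (closure (V u)) (closure (V v)) := by
    intro u
    induction u with
    | nil =>
      intro v hlen hne
      exact absurd (List.length_eq_zero_iff.mp hlen.symm).symm hne
    | cons b u ih =>
      intro v hlen hne
      match v with
      | [] => simp at hlen
      | c :: v' =>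
        by_cases huv : u = v'
        · subst huv
          have hbc : b ≠ c := fun h => hne (by rw [h])
          match b, c with
          | false, true => exact hsib u
          | true, false => exact (hsib u).symm
          | false, false => exact absurd rfl hbc
          | true, true => exact absurd rfl hbc
        · have hd := ih v' (by simpa using hlen) huv
          exact hd.mono ((hVsub b u).trans subset_closure)
            ((hVsub c v').trans subset_closure)
  -- Zorn: minimal closed set hitting all nodes
  set C : Set (Set Y) := {F | IsClosed F ∧ ∀ u, (F ∩ closure (V u)).Nonempty} with hC
  have hunivC : Set.univ ∈ C := by
    refine ⟨isClosed_univ, fun u => ?_⟩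
    obtain ⟨y, hy⟩ := hVB u
    exact ⟨y, Set.mem_univ y, subset_closure hy.1⟩
  have hchainlb : ∀ c ⊆ C, IsChain (· ⊆ ·) c → c.Nonempty →
      ∃ lb ∈ C, ∀ s ∈ c, lb ⊆ s := by
    intro c hcC hchain hcne
    refine ⟨⋂₀ c, ⟨isClosed_sInter (fun F hF => (hcC hF).1), fun u => ?_⟩,
      fun s hs => Set.sInter_subset_of_mem hs⟩
    haveI : Nonempty c := hcne.to_subtype
    have hne := IsCompact.nonempty_iInter_of_directed_nonempty_isCompact_isClosed
      (fun F : c => (F : Set Y) ∩ closure (V u)) ?_ ?_ ?_ ?_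
    · obtain ⟨y, hy⟩ := hne
      simp only [Set.mem_iInter] at hy
      obtain ⟨c0, hc0⟩ := hcne
      exact ⟨y, Set.mem_sInter.mpr fun Fm hFm => (hy ⟨Fm, hFm⟩).1, (hy ⟨c0, hc0⟩).2⟩
    · intro F F'
      rcases hchain.total F.2 F'.2 with h | h
      · exact ⟨F, Set.Subset.rfl, Set.inter_subset_inter_left _ h⟩
      · exact ⟨F', Set.inter_subset_inter_left _ h, Set.Subset.rfl⟩
    · exact fun F => (hcC F.2).2 u
    · exact fun F => (((hcC F.2).1.inter isClosed_closure)).isCompact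
    · exact fun F => (hcC F.2).1.inter isClosed_closure
  obtain ⟨F, -, hFmin⟩ := zorn_superset_nonempty C hchainlb Set.univ hunivC
  have hFC : F ∈ C := hFmin.1
  have hFcl : IsClosed F := hFC.1
  have hit : ∀ u, (F ∩ closure (V u)).Nonempty := hFC.2
  -- F is contained in each level's union
  have hlev : ∀ n : ℕ, F ⊆ ⋃ u ∈ {u : List Bool | u.length = n}, closure (V u) := by
    intro n
    set L := ⋃ u ∈ {u : List Bool | u.length = n}, closure (V u) with hL
    have hLc : IsClosed L := (lvl_finite n).isClosed_biUnion (fun u _ => isClosed_closure)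
    have hFL : F ∩ L ∈ C := by
      refine ⟨hFcl.inter hLc, fun u => ?_⟩
      set w := List.replicate n false ++ u with hw
      obtain ⟨y, hyF, hycl⟩ := hit w
      have hyL : y ∈ L := by
        have hdrop : (w.drop (w.length - n)).length = n := by
          simp [hw]
        refine Set.mem_biUnion hdrop ?_
        exact MONO _ w (List.drop_suffix _ _) hycl
      exact ⟨y, ⟨hyF, hyL⟩, MONO u w ⟨List.replicate n false, rfl⟩ hycl⟩
    have hsub : F ⊆ F ∩ L := hFmin.2 hFL Set.inter_subset_left
    exact fun y hy => (hsub hy).2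
  have hFG : ∀ n, F ⊆ G n := by
    intro n y hy
    obtain ⟨u, hu, hycl⟩ := Set.mem_iUnion₂.mp (hlev n hy)
    exact hu ▸ hVG u hycl
  -- minimality: irreducibility property
  have hminred : ∀ O : Set Y, IsOpen O → (O ∩ F).Nonempty →
      ∃ s, F ∩ closure (V s) ⊆ O := by
    intro O hO hOF
    by_contra h
    push_neg at h
    have hFO : F \ O ∈ C := by
      refine ⟨hFcl.inter (isClosed_compl_iff.mpr hO), fun u => ?_⟩
      obtain ⟨z, hz, hzO⟩ := Set.not_subset.mp (h u)
      exact ⟨z, ⟨hz.1, hzO⟩, hz.2⟩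
    have := hFmin.2 hFO Set.diff_subset
    obtain ⟨y, hyO, hyF⟩ := hOF
    exact (this hyF).2 hyO
  -- infinitude of node traces
  have INF : ∀ u, (F ∩ closure (V u)).Infinite := by
    intro u
    have hpick : ∀ j : ℕ,
        (F ∩ closure (V ((true :: List.replicate j false) ++ u))).Nonempty :=
      fun j => hit _
    set p : ℕ → Y := fun j => (hpick j).some with hp
    have hmemp : ∀ j, p j ∈ F ∩ closure (V u) := by
      intro j
      refine ⟨(hpick j).some_mem.1, MONO u _ ⟨true :: List.replicate j false, rfl⟩
        (hpick j).some_mem.2⟩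
    have hinj : Function.Injective p := by
      have haux : ∀ j k : ℕ, j < k → p j ≠ p k := by
        intro j k hjk heq
        have h1 : p j ∈ closure (V ((true :: List.replicate j false) ++ u)) :=
          (hpick j).some_mem.2
        have hsuf : (false :: List.replicate j false) ++ u <:+
            (true :: List.replicate k false) ++ u := by
          refine ⟨true :: List.replicate (k - j - 1) false, ?_⟩
          have hk2 : List.replicate (k - j - 1) false ++ (false :: List.replicate j false)
              = List.replicate k false := by
            rw [← List.replicate_succ, ← List.replicate_add]
            congr 1
            omega
          rw [← hk2]
          simp only [List.cons_append, List.append_assoc]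
        have h2 : p k ∈ closure (V ((false :: List.replicate j false) ++ u)) :=
          MONO _ _ hsuf (hpick k).some_mem.2
        have hd := DISJ ((true :: List.replicate j false) ++ u)
          ((false :: List.replicate j false) ++ u) (by simp) (by simp)
        exact Set.disjoint_left.mp hd h1 (heq ▸ h2)
      intro j k hjk
      by_contra hne
      rcases lt_or_gt_of_ne hne with h | h
      · exact haux j k h hjk
      · exact haux k j h hjk.symm
    exact Set.infinite_of_injective_forall_mem hinj hmemp
  -- choose distinct points
  have pickex : ∀ (u : List Bool) (l : List Y),
      ∃ y, y ∈ F ∩ closure (V u) ∧ y ∉ l := by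
    intro u l
    obtain ⟨y, hy⟩ := ((INF u).diff (List.finite_toSet l)).nonempty
    exact ⟨y, hy.1, hy.2⟩
  obtain ⟨r, hrnil, hrcons⟩ : ∃ r : List Bool → List Y,
      r [] = [(pickex [] []).choose] ∧
      ∀ b u, r (b :: u) = (pickex (b :: u) (r u)).choose :: r u :=
    ⟨fun u => List.rec [(pickex [] []).choose]
      (fun b u ih => (pickex (b :: u) ih).choose :: ih) u, rfl, fun _ _ => rfl⟩
  haveI : Inhabited Y := ⟨b0⟩
  set t : List Bool → Y := fun u => (r u).headI with htdef
  have htnil : t [] = (pickex [] []).choose := by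
    simp [htdef, hrnil]
  have htcons : ∀ b u, t (b :: u) = (pickex (b :: u) (r u)).choose := by
    intro b u; simp [htdef, hrcons]
  have ht : ∀ u, t u ∈ F ∩ closure (V u) := by
    intro u
    match u with
    | [] => rw [htnil]; exact (pickex [] []).choose_spec.1
    | b :: u => rw [htcons]; exact (pickex (b :: u) (r u)).choose_spec.1
  have hnotin : ∀ b u, t (b :: u) ∉ r u := by
    intro b u
    rw [htcons]
    exact (pickex (b :: u) (r u)).choose_spec.2
  have hmemr : ∀ u w : List Bool, w <:+ u → t w ∈ r u := by
    intro u
    induction u with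
    | nil =>
      intro w hw
      rw [List.suffix_nil.mp hw, hrnil, htnil]
      exact List.mem_singleton_self _
    | cons b u ih =>
      intro w hw
      rcases List.suffix_cons_iff.mp hw with h | h
      · subst h
        rw [hrcons, htcons]
        exact List.mem_cons_self
      · rw [hrcons]
        exact List.mem_cons_of_mem _ (ih w h)
  have tinj : Function.Injective t := by
    have haux : ∀ u v : List Bool, u.length = v.length → u ≠ v → t u ≠ t v := by
      intro u v hl hne heq
      exact Set.disjoint_left.mp (DISJ u v hl hne) (ht u).2 (heq ▸ (ht v).2)
    have haux2 : ∀ u v : List Bool, u.length < v.length → t u ≠ t v := by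
      intro u v hlt heq
      match v with
      | [] => simp at hlt
      | c :: v' =>
        set w := v'.drop (v'.length - u.length) with hwdef
        have hwlen : w.length = u.length := by
          simp only [hwdef, List.length_drop]
          simp at hlt
          omega
        have hwsuf : w <:+ v' := List.drop_suffix _ _
        by_cases hwu : w = u
        · have h1 : t u ∈ r v' := hmemr v' u (hwu ▸ hwsuf)
          exact hnotin c v' (heq.symm ▸ h1)
        · have h2 : t (c :: v') ∈ closure (V w) :=
            MONO w (c :: v') (hwsuf.trans (List.suffix_cons c v')) (ht (c :: v')).2
          exact Set.disjoint_left.mp (DISJ u w hwlen.symm (Ne.symm hwu))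
            (ht u).2 (heq ▸ h2)
    intro u v heq
    by_contra hne
    rcases lt_trichotomy u.length v.length with h | h | h
    · exact haux2 u v h heq
    · exact haux u v h hne heq
    · exact haux2 v u h heq.symm
  exact ⟨V, F, t, hVo, hVsub, hFcl, hFG, ht, tinj, hminred⟩

end Aux

theorem stmt5 {X : Type u} [TopologicalSpace X] [T35Space X]
    (hcc : CechComplete X) (hκ : PropertyKappa X) : IsScattered X := by
  classical
  by_contra hns
  rw [IsScattered] at hns
  push_neg at hns
  obtain ⟨A, hAne, hA⟩ := hns
  obtain ⟨Y, tY, cY, t2Y, e, hemb, -, hGδ⟩ := hcc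
  obtain ⟨G, hGopen, hGeq⟩ := hGδ.eq_iInter_nat
  set B : Set Y := e '' A with hBdef
  have hB : B.Nonempty := hAne.image e
  have hBG : ∀ n, B ⊆ G n := by
    intro n y hy
    have : y ∈ Set.range e := by
      obtain ⟨a, -, rfl⟩ := hy
      exact ⟨a, rfl⟩
    rw [hGeq] at this
    exact Set.mem_iInter.mp this n
  have h2 : ∀ O : Set Y, IsOpen O → (O ∩ B).Nonempty →
      ∃ p ∈ O ∩ B, ∃ q ∈ O ∩ B, p ≠ q := by
    intro O hO ⟨y, hyO, hyB⟩
    obtain ⟨a, haA, rfl⟩ := hyB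
    have hU' : IsOpen (e ⁻¹' O) := hO.preimage hemb.continuous
    have hne := hA a haA (e ⁻¹' O) hU'
    have haU : a ∈ e ⁻¹' O ∩ A := ⟨hyO, haA⟩
    have hex : ∃ a', a' ∈ e ⁻¹' O ∩ A ∧ a' ≠ a := by
      by_contra h
      push_neg at h
      exact hne (Set.eq_singleton_iff_unique_mem.mpr ⟨haU, fun x hx => h x hx⟩)
    obtain ⟨a', ⟨ha'O, ha'A⟩, hne'⟩ := hex
    refine ⟨e a, ⟨hyO, a, haA, rfl⟩, e a', ⟨ha'O, a', ha'A, rfl⟩, ?_⟩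
    exact fun h => hne' (hemb.injective h.symm)
  obtain ⟨V, F, t, hVo, hVsub, hFcl, hFG, ht, tinj, hmin⟩ :=
    key_construction G hGopen B hB hBG h2
  have MONO := tree_mono V hVsub
  have hFR : F ⊆ Set.range e := by
    intro y hy
    rw [hGeq]
    exact Set.mem_iInter.mpr fun n => hFG n hy
  have xOf : ∀ u : List Bool, ∃ x : X, e x = t u := fun u => hFR (ht u).1
  set x : List Bool → X := fun u => (xOf u).choose with hxdef
  have hx : ∀ u, e (x u) = t u := fun u => (xOf u).choose_spec
  have hxinj : Function.Injective x := by
    intro u v huv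
    apply tinj
    rw [← hx u, ← hx v, huv]
  set AA : ℕ → Set X := fun n => x '' {u : List Bool | u.length = n} with hAAdef
  have hAAfin : ∀ n, (AA n).Finite := fun n => (lvl_finite n).image x
  have hAAdis : Pairwise fun m n => Disjoint (AA m) (AA n) := by
    intro m n hmn
    rw [Set.disjoint_left]
    rintro z ⟨u, hu, rfl⟩ ⟨v, hv, hvz⟩
    exact hmn (hu ▸ hv ▸ congrArg List.length (hxinj hvz.symm) ▸ rfl)
  obtain ⟨φ, hφ, U, hU, hpf⟩ := hκ AA hAAfin hAAdis
  have hWex : ∀ n, ∃ Wn : Set Y, IsOpen Wn ∧ e ⁻¹' Wn = U n :=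
    fun n => hemb.toIsInducing.isOpen_iff.mp (hU n).1
  set W : ℕ → Set Y := fun n => (hWex n).choose with hWdef
  have hWopen : ∀ n, IsOpen (W n) := fun n => (hWex n).choose_spec.1
  have hWpre : ∀ n, e ⁻¹' W n = U n := fun n => (hWex n).choose_spec.2
  -- the recursive step
  have STEP : ∀ p : List Bool × ℕ, ∃ q : List Bool × ℕ, p.2 < q.2 ∧
      F ∩ closure (V q.1) ⊆ W q.2 ∧ F ∩ closure (V q.1) ⊆ closure (V p.1) := by
    rintro ⟨s, n⟩
    set n' := max (n + 1) (s.length + 1) with hn'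
    have hn'1 : n < n' := lt_of_lt_of_le (Nat.lt_succ_self n) (le_max_left _ _)
    have hlen : s.length + 1 ≤ φ n' := le_trans (le_max_right _ _) hφ.le_apply
    obtain ⟨k, hk⟩ : ∃ k, φ n' - s.length = k + 1 := ⟨φ n' - s.length - 1, by omega⟩
    set u' := List.replicate k false ++ s with hu'
    set uu := false :: u' with huu
    have hulen : uu.length = φ n' := by
      simp only [huu, hu', List.length_cons, List.length_append, List.length_replicate]
      omega
    have htu : t uu ∈ W n' := by
      have hxA : x uu ∈ AA (φ n') := ⟨uu, hulen, rfl⟩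
      have hxU : x uu ∈ U n' := (hU n').2 hxA
      rw [← hWpre n'] at hxU
      rw [← hx uu]
      exact hxU
    have htu2 : t uu ∈ V u' := hVsub false u' (ht uu).2
    have hOne : ((W n' ∩ V u') ∩ F).Nonempty := ⟨t uu, ⟨htu, htu2⟩, (ht uu).1⟩
    obtain ⟨s', hs'⟩ := hmin (W n' ∩ V u') ((hWopen n').inter (hVo u')) hOne
    refine ⟨(s', n'), hn'1, fun y hy => (hs' hy).1, ?_⟩
    intro y hy
    exact MONO s u' ⟨List.replicate k false, rfl⟩ (subset_closure (hs' hy).2)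
  set next : List Bool × ℕ → List Bool × ℕ := fun p => (STEP p).choose with hnext
  set seq : ℕ → List Bool × ℕ := fun k => next^[k] ([], 0) with hseqdef
  have hseq : ∀ k, seq (k + 1) = next (seq k) := by
    intro k
    simp only [hseqdef]
    exact Function.iterate_succ_apply' next k _
  have hspec : ∀ k, (seq k).2 < (seq (k + 1)).2 ∧
      F ∩ closure (V (seq (k + 1)).1) ⊆ W (seq (k + 1)).2 ∧
      F ∩ closure (V (seq (k + 1)).1) ⊆ closure (V (seq k).1) := by
    intro k
    rw [hseq k]
    exact (STEP (seq k)).choose_spec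
  set E : ℕ → Set Y := fun k => F ∩ closure (V (seq k).1) with hEdef
  have hEdec : ∀ k, E (k + 1) ⊆ E k := by
    intro k y hy
    exact ⟨hy.1, (hspec k).2.2 hy⟩
  have hEne : ∀ k, (E k).Nonempty := fun k => ⟨t (seq k).1, ht _⟩
  have hEcl : ∀ k, IsClosed (E k) := fun k => hFcl.inter isClosed_closure
  have hEcp : IsCompact (E 0) := (hEcl 0).isCompact
  obtain ⟨z, hz⟩ := IsCompact.nonempty_iInter_of_sequence_nonempty_isCompact_isClosed
    E hEdec hEne hEcp hEcl
  simp only [Set.mem_iInter] at hz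
  obtain ⟨xz, hxz⟩ := hFR (hz 0).1
  have hnφ : StrictMono (fun k => (seq (k + 1)).2) :=
    strictMono_nat_of_lt_succ (fun k => (hspec (k + 1)).1)
  have hmem : ∀ k, xz ∈ U ((seq (k + 1)).2) := by
    intro k
    have : z ∈ W ((seq (k + 1)).2) := (hspec k).2.1 (hz (k + 1))
    rw [← hWpre ((seq (k + 1)).2)]
    rw [Set.mem_preimage, hxz]
    exact this
  have hinf : {n : ℕ | xz ∈ U n}.Infinite :=
    Set.infinite_of_injective_forall_mem hnφ.injective hmem
  exact hinf (hpf xz)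
end

section
/- A nonempty compact Hausdorff space K that is not scattered does not have property (κ). More precisely, if K is compact and admits a continuous surjection onto [0,1], then there is a pairwise disjoint sequence of finite subsets of K with no strongly point-finite subsequence. -/
lemma odd_mul_pow_inj {k j m n : ℕ} (h : (2*k+1) * 2^m = (2*j+1) * 2^n) : m = n := by
  induction m generalizing n with
  | zero =>
    cases n with
    | zero => rfl
    | succ n =>
      exfalso
      rw [pow_zero, mul_one, pow_succ, ← mul_assoc] at h
      omega
  | succ m ih =>
    cases n with
    | zero =>
      exfalso
      rw [pow_zero, mul_one, pow_succ, ← mul_assoc] at h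
      omega
    | succ n =>
      rw [pow_succ, pow_succ, ← mul_assoc, ← mul_assoc] at h
      exact congrArg Nat.succ (ih (Nat.eq_of_mul_eq_mul_right two_pos h))

noncomputable def midpt (n k : ℕ) : ℝ := (2*k+1) / 2^(n+1)

lemma midpt_mem {n k : ℕ} (hk : k < 2^n) : midpt n k ∈ Set.Icc (0:ℝ) 1 := by
  unfold midpt
  constructor
  · positivity
  · rw [div_le_one (by positivity)]
    have : (k:ℝ) + 1 ≤ 2^n := by exact_mod_cast hk
    rw [pow_succ]
    nlinarith

lemma midpt_dense {t : ℝ} (ht : t ∈ Set.Icc (0:ℝ) 1) (n : ℕ) :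
    ∃ k < 2^n, |t - midpt n k| ≤ (2^(n+1))⁻¹ := by
  obtain ⟨ht0, ht1⟩ := ht
  set k := min ⌊t * 2^n⌋₊ (2^n - 1) with hkdef
  have hpow : (0:ℕ) < 2^n := Nat.two_pow_pos n
  refine ⟨k, by omega, ?_⟩
  have h1 : (k : ℝ) ≤ t * 2^n := by
    rcases le_or_gt ⌊t * 2^n⌋₊ (2^n - 1) with h | h
    · have hk2 : k = ⌊t * 2^n⌋₊ := by omega
      rw [hk2]
      exact Nat.floor_le (by positivity)
    · have h3 : ((2^n : ℕ) : ℝ) ≤ (⌊t * 2^n⌋₊ : ℝ) := Nat.cast_le.mpr (by omega)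
      have h4 : ((⌊t * 2^n⌋₊ : ℕ) : ℝ) ≤ t * 2^n := Nat.floor_le (by positivity)
      have hk2 : (k:ℝ) ≤ ((2^n : ℕ) : ℝ) := Nat.cast_le.mpr (by omega)
      exact hk2.trans (h3.trans h4)
  have h2 : t * 2^n ≤ (k : ℝ) + 1 := by
    rcases le_or_gt ⌊t * 2^n⌋₊ (2^n - 1) with h | h
    · have hk2 : k = ⌊t * 2^n⌋₊ := by omega
      rw [hk2]
      exact le_of_lt (Nat.lt_floor_add_one _)
    · -- t = 1 essentially: t*2^n ≤ 2^n = (2^n -1) + 1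
      have hk2 : k = 2^n - 1 := by omega
      have : t * 2^n ≤ 2^n := by nlinarith [pow_pos (by norm_num : (0:ℝ) < 2) n]
      calc t * 2^n ≤ (2:ℝ)^n := this
        _ = (k:ℝ) + 1 := by
            rw [hk2]
            push_cast [Nat.cast_sub (by omega : 1 ≤ 2^n)]
            ring
  have hp : (0:ℝ) < 2^(n+1) := by positivity
  have e1 : t - midpt n k = (t*2^(n+1) - (2*k+1))/2^(n+1) := by
    unfold midpt; field_simp
  rw [e1, abs_div, abs_of_pos hp, div_le_iff₀ hp, inv_mul_cancel₀ (ne_of_gt hp)]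
  have e2 : (2:ℝ)^(n+1) = 2^n * 2 := by rw [pow_succ]
  rw [abs_le, e2]
  constructor <;> nlinarith

open Topology Filter

theorem stmt6 {K : Type*} [TopologicalSpace K] [CompactSpace K] [T2Space K]
    [Nonempty K]
    (f : K → Set.Icc (0 : ℝ) 1) (hf : Continuous f) (hsurj : Function.Surjective f) :
    ∃ A : ℕ → Set K, (∀ n, (A n).Finite) ∧
      (Pairwise fun m n => Disjoint (A m) (A n)) ∧
      ¬∃ φ : ℕ → ℕ, StrictMono φ ∧ ∃ U : ℕ → Set K,
        (∀ n, IsOpen (U n) ∧ A (φ n) ⊆ U n) ∧ ∀ x : K, {n : ℕ | x ∈ U n}.Finite := by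
  classical
  set S : Set (Set K) := {L | IsClosed L ∧ ∀ t : Set.Icc (0:ℝ) 1, ∃ x ∈ L, f x = t}
    with hS
  -- Zorn: minimal closed set mapping onto [0,1]
  have hzorn : ∃ m, Minimal (· ∈ S) m := by
    apply zorn_superset
    intro c hc hchain
    rcases c.eq_empty_or_nonempty with rfl | hne
    · exact ⟨Set.univ, ⟨isClosed_univ,
        fun t => (hsurj t).imp fun x hx => ⟨trivial, hx⟩⟩, by simp⟩
    · have hcne : Nonempty c := hne.to_subtype
      refine ⟨⋂₀ c, ⟨isClosed_sInter fun s hs => (hc hs).1, ?_⟩,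
        fun s hs => Set.sInter_subset_of_mem hs⟩
      intro t
      have hdir : Directed (· ⊇ ·) (fun s : c => s.1 ∩ f ⁻¹' {t}) := by
        intro s s'
        rcases hchain.total s.2 s'.2 with h | h
        · exact ⟨s, le_refl _, Set.inter_subset_inter_left _ h⟩
        · exact ⟨s', Set.inter_subset_inter_left _ h, le_refl _⟩
      have hfcl : IsClosed (f ⁻¹' {t}) := IsClosed.preimage hf isClosed_singleton
      have hne2 : (⋂ s : c, (s.1 ∩ f ⁻¹' {t})).Nonempty := by
        apply IsCompact.nonempty_iInter_of_directed_nonempty_isCompact_isClosed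
          _ hdir
        · rintro ⟨s, hs⟩
          obtain ⟨x, hx, hxf⟩ := (hc hs).2 t
          exact ⟨x, hx, hxf⟩
        · exact fun s => (((hc s.2).1.inter hfcl)).isCompact
        · exact fun s => (hc s.2).1.inter hfcl
      obtain ⟨x, hx⟩ := hne2
      simp only [Set.mem_iInter, Set.mem_inter_iff, Set.mem_preimage,
        Set.mem_singleton_iff] at hx
      refine ⟨x, ?_, (hx ⟨_, hne.choose_spec⟩).2⟩
      intro s hs
      exact (hx ⟨s, hs⟩).1
  obtain ⟨L, hLmin⟩ := hzorn
  obtain ⟨hL1, hL2⟩ := hLmin.1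
  have hLcp : IsCompact L := hL1.isCompact
  -- choose points over each midpoint
  have hxex : ∀ n k : ℕ, ∃ x, x ∈ L ∧
      f x = ⟨midpt n (min k (2^n - 1)),
        midpt_mem (by have h := Nat.two_pow_pos n; omega)⟩ :=
    fun n k => hL2 _
  choose g hgL hgf using hxex
  have hgf' : ∀ n k, k < 2^n → (f (g n k) : ℝ) = midpt n k := by
    intro n k hk
    have hp : 0 < 2^n := Nat.two_pow_pos n
    have : min k (2^n - 1) = k := by omega
    rw [hgf n k]
    exact congrArg (midpt n) this
  refine ⟨fun n => g n '' Set.Iio (2^n), fun n => (Set.finite_Iio _).image _, ?_, ?_⟩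
  · -- pairwise disjoint
    intro m n hmn
    rw [Set.disjoint_left]
    rintro x ⟨k, hk, rfl⟩ ⟨j, hj, hx⟩
    apply hmn
    have h1 : (f (g m k) : ℝ) = midpt m k := hgf' m k hk
    have h2 : (f (g n j) : ℝ) = midpt n j := hgf' n j hj
    rw [hx, h1] at h2
    unfold midpt at h2
    rw [div_eq_div_iff (by positivity) (by positivity)] at h2
    have h3 : (2*k+1) * 2^(n+1) = (2*j+1) * 2^(m+1) := by exact_mod_cast h2
    have := odd_mul_pow_inj h3
    omega
  · rintro ⟨φ, hφ, U, hU, hpf⟩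
    have hcs : CompactSpace ↥L := isCompact_iff_compactSpace.1 hLcp
    have hLne : L.Nonempty := (hL2 ⟨0, by norm_num⟩).imp fun x hx => hx.1
    have hnel : Nonempty ↥L := hLne.to_subtype
    set G : ℕ → Set ↥L := fun N => ⋃ n ∈ Set.Ici N, Subtype.val ⁻¹' U n with hG
    have hGopen : ∀ N, IsOpen (G N) :=
      fun N => isOpen_biUnion fun n _ => (hU n).1.preimage continuous_subtype_val
    have hGdense : ∀ N, Dense (G N) := by
      intro N
      rw [dense_iff_inter_open]
      rintro V hV ⟨x₀, hx₀V⟩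
      obtain ⟨W, hW, rfl⟩ := isOpen_induced_iff.1 hV
      set C : Set ↥(Set.Icc (0:ℝ) 1) := f '' (L ∩ Wᶜ) with hC
      have hCcl : IsClosed C :=
        ((hL1.inter (isClosed_compl_iff.2 hW)).isCompact.image hf).isClosed
      have hCne : Cᶜ.Nonempty := by
        by_contra h
        rw [Set.not_nonempty_iff_eq_empty, Set.compl_empty_iff] at h
        have hmem : (L ∩ Wᶜ) ∈ S := by
          refine ⟨hL1.inter (isClosed_compl_iff.2 hW), fun t => ?_⟩
          have ht : t ∈ C := h ▸ Set.mem_univ t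
          obtain ⟨x, hx, hfx⟩ := ht
          exact ⟨x, hx, hfx⟩
        have hsub := hLmin.2 hmem Set.inter_subset_left
        exact (hsub x₀.2).2 hx₀V
      obtain ⟨t₀, ht₀⟩ := hCne
      obtain ⟨ε, hε, hball⟩ := Metric.isOpen_iff.1 hCcl.isOpen_compl t₀ ht₀
      obtain ⟨M, hM⟩ := exists_pow_lt_of_lt_one hε (by norm_num : (2:ℝ)⁻¹ < 1)
      set n := max N M with hn
      have hφn : M ≤ φ n + 1 :=
        le_trans (le_max_right N M) (Nat.le_succ_of_le hφ.le_apply)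
      have hsmall : ((2:ℝ)^(φ n + 1))⁻¹ < ε := by
        calc ((2:ℝ)^(φ n + 1))⁻¹ = (2⁻¹)^(φ n + 1) := by rw [inv_pow]
          _ ≤ (2⁻¹)^M := pow_le_pow_of_le_one (by norm_num) (by norm_num) hφn
          _ < ε := hM
      obtain ⟨k, hk, hkd⟩ := midpt_dense t₀.2 (φ n)
      have hsball : (⟨midpt (φ n) k, midpt_mem hk⟩ : ↥(Set.Icc (0:ℝ) 1))
          ∈ Metric.ball t₀ ε := by
        rw [Metric.mem_ball, Subtype.dist_eq, Real.dist_eq]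
        calc |midpt (φ n) k - t₀.1| = |t₀.1 - midpt (φ n) k| := abs_sub_comm _ _
          _ ≤ ((2:ℝ)^(φ n + 1))⁻¹ := hkd
          _ < ε := hsmall
      have hnotC := hball hsball
      have hxW : g (φ n) k ∈ W := by
        by_contra hxW
        apply hnotC
        refine ⟨g (φ n) k, ⟨hgL _ _, hxW⟩, ?_⟩
        exact Subtype.ext (hgf' (φ n) k hk)
      refine ⟨⟨g (φ n) k, hgL _ _⟩, hxW, ?_⟩
      exact Set.mem_biUnion (le_max_left N M) ((hU n).2 ⟨k, hk, rfl⟩)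
    have hdense := dense_iInter_of_isOpen hGopen hGdense
    obtain ⟨x, hx⟩ := hdense.nonempty
    rw [Set.mem_iInter] at hx
    obtain ⟨b, hb⟩ := (hpf x.1).bddAbove
    have hxb := hx (b+1)
    simp only [hG, Set.mem_iUnion, Set.mem_Ici, Set.mem_preimage] at hxb
    obtain ⟨m, hm1, hm2⟩ := hxb
    exact absurd (hb hm2) (by omega)
end

section
/- Let {X_i : i ∈ I} be a family of topological spaces such that the product ∏_{i∈I'} X_i is Fréchet–Urysohn for every countable subset I' ⊆ I. Then for every point z of the full product ∏_{i∈I} X_i, the Σ-product Σ(z) = {y : {i : y_i ≠ z_i} is countable} is a Fréchet–Urysohn space. -/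
open Topology Filter

theorem stmt7 {I : Type u} {X : I → Type v} [∀ i, TopologicalSpace (X i)]
    (h : ∀ s : Set I, s.Countable → FrechetUrysohnSpace (∀ i : s, X i))
    (z : ∀ i, X i) :
    FrechetUrysohnSpace {y : ∀ i, X i // {i : I | y i ≠ z i}.Countable} := by
  set Z := {y : ∀ i, X i // {i : I | y i ≠ z i}.Countable} with hZ
  constructor
  intro A x hx
  -- key: for any countable s, a sequence in A whose restriction to s converges
  have key : ∀ s : Set I, s.Countable → ∃ u : ℕ → Z, (∀ n, u n ∈ A) ∧
      Tendsto (fun n => fun i : s => (u n).val i) atTop (𝓝 fun i : s => x.val i) := by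
    intro s hs
    haveI := h s hs
    set r : Z → ∀ i : s, X i := fun y => fun i : s => y.val i with hr
    have hrc : Continuous r :=
      continuous_pi fun i => (continuous_apply (i : I)).comp continuous_subtype_val
    have hcl : r x ∈ closure (r '' A) :=
      map_mem_closure hrc hx (Set.mapsTo_image r A)
    obtain ⟨w, hwA, hwt⟩ := mem_closure_iff_seq_limit.mp hcl
    choose v hvA hveq using hwA
    refine ⟨v, hvA, ?_⟩
    have : (fun n => r (v n)) = w := funext hveq
    rw [show (fun n => fun i : s => (v n).val i) = fun n => r (v n) from rfl, this]
    exact hwt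
  choose u huA hut using key
  -- recursive construction of countable sets
  let T : ℕ → {s : Set I // s.Countable} := fun n =>
    Nat.rec ⟨{i | x.val i ≠ z i}, x.2⟩
      (fun _ p => ⟨p.1 ∪ ⋃ k, {i | (u p.1 p.2 k).val i ≠ z i},
        p.2.union (Set.countable_iUnion fun k => (u p.1 p.2 k).2)⟩) n
  let a : ℕ → ℕ → Z := fun n k => u (T n).1 (T n).2 k
  have hTsucc : ∀ n, (T (n+1)).1 = (T n).1 ∪ ⋃ k, {i | (a n k).val i ≠ z i} := fun n => rfl
  have hTmono : Monotone fun n => (T n).1 :=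
    monotone_nat_of_le_succ fun n => by
      rw [hTsucc n]; exact Set.subset_union_left
  set S : Set I := ⋃ n, (T n).1 with hS
  have hScount : S.Countable := Set.countable_iUnion fun n => (T n).2
  have hsuppx : {i | x.val i ≠ z i} ⊆ S := Set.subset_iUnion (fun n => (T n).1) 0
  have hsuppa : ∀ n k, {i | (a n k).val i ≠ z i} ⊆ S := by
    intro n k i hi
    refine Set.mem_iUnion.mpr ⟨n+1, ?_⟩
    rw [hTsucc n]
    exact Or.inr (Set.mem_iUnion.mpr ⟨k, hi⟩)
  set rS : Z → ∀ i : S, X i := fun y => fun i : S => y.val i with hrS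
  set A₀ : Set Z := Set.range (fun p : ℕ × ℕ => a p.1 p.2) with hA₀
  -- rS x is in the closure of rS '' A₀
  have hclS : rS x ∈ closure (rS '' A₀) := by
    rw [mem_closure_iff_nhds]
    intro t ht
    rw [nhds_pi, Filter.mem_pi] at ht
    obtain ⟨F, hFfin, t', ht', hsub⟩ := ht
    have hc : ∀ i : S, ∃ n, (i : I) ∈ (T n).1 := fun i => Set.mem_iUnion.mp i.2
    choose f hf using hc
    obtain ⟨N, hN⟩ := (hFfin.image f).bddAbove
    have hFN : ∀ i ∈ F, (i : I) ∈ (T N).1 := fun i hi =>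
      hTmono (hN (Set.mem_image_of_mem f hi)) (hf i)
    have htend := hut (T N).1 (T N).2
    rw [tendsto_pi_nhds] at htend
    have hev : ∀ᶠ k in atTop, ∀ i ∈ F, (a N k).val i ∈ t' i := by
      rw [eventually_all_finite hFfin]
      intro i hi
      exact (htend ⟨i, hFN i hi⟩).eventually_mem (ht' i)
    obtain ⟨k, hk⟩ := hev.exists
    refine ⟨rS (a N k), hsub fun i hi => hk i hi, Set.mem_image_of_mem rS ⟨⟨N, k⟩, rfl⟩⟩
  haveI := h S hScount
  obtain ⟨w, hwA, hwt⟩ := mem_closure_iff_seq_limit.mp hclS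
  choose b hbA₀ hbeq using hwA
  refine ⟨b, fun m => ?_, ?_⟩
  · obtain ⟨⟨n, k⟩, hnk⟩ := hbA₀ m
    exact hnk ▸ huA (T n).1 (T n).2 k
  · rw [tendsto_subtype_rng, tendsto_pi_nhds]
    intro i
    by_cases hi : i ∈ S
    · have h1 : (fun m => (b m).val i) = fun m => w m ⟨i, hi⟩ := by
        funext m; exact congrFun (hbeq m) ⟨i, hi⟩
      rw [h1]
      have := tendsto_pi_nhds.mp hwt ⟨i, hi⟩
      exact this
    · have hxz : x.val i = z i := by
        by_contra hne; exact hi (hsuppx hne)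
      have hbz : ∀ m, (b m).val i = z i := by
        intro m
        obtain ⟨⟨n, k⟩, hnk⟩ := hbA₀ m
        by_contra hne
        exact hi (hsuppa n k (by rw [← hnk] at hne; exact hne))
      simp only [hbz, hxz]
      exact tendsto_const_nhds
end

section
/- Every Σ-subspace of a product of first-countable topological spaces is a Fréchet–Urysohn space. -/
open Topology Filter Set

theorem sigma_key {I : Type u} {X : I → Type v} [∀ i, TopologicalSpace (X i)]
    [∀ i, FirstCountableTopology (X i)] (B : Set (∀ i, X i)) (x : ∀ i, X i)
    (hB : ∀ y ∈ B, ({i | y i ≠ x i}).Countable) (hx : x ∈ closure B) :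
    ∃ u : ℕ → ∀ i, X i, (∀ n, u n ∈ B) ∧ Tendsto u atTop (𝓝 x) := by
  classical
  -- antitone bases at each coordinate of x
  have hbas : ∀ i, ∃ b : ℕ → Set (X i), (𝓝 (x i)).HasAntitoneBasis b := fun i =>
    (𝓝 (x i)).exists_antitone_basis
  choose b hb using hbas
  have hbmem : ∀ i k, b i k ∈ 𝓝 (x i) := fun i k => (hb i).1.mem_of_mem trivial
  -- chosen points in B meeting each basic neighborhood
  have ha : ∀ (F : Finset I) (m : I → ℕ),
      ∃ y, y ∈ B ∧ y ∈ Set.pi ↑F fun i => b i (m i) := by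
    intro F m
    have hV : (Set.pi ↑F fun i => b i (m i)) ∈ 𝓝 x :=
      set_pi_mem_nhds (F.finite_toSet) fun i _ => hbmem i (m i)
    rcases mem_closure_iff_nhds.1 hx _ hV with ⟨y, hy1, hy2⟩
    exact ⟨y, hy2, hy1⟩
  choose a haB haV using ha
  -- the recursive construction
  let Cs : Set (∀ i, X i) → Set I := fun P => {i | ∃ y ∈ P, y i ≠ x i}
  let T : Set I → Set (Finset I × (I → ℕ)) :=
    fun c => {Fm | ↑Fm.1 ⊆ c ∧ ∀ i ∉ Fm.1, Fm.2 i = 0}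
  let step : Set (∀ i, X i) → Set (∀ i, X i) :=
    fun P => P ∪ (fun Fm : Finset I × (I → ℕ) => a Fm.1 Fm.2) '' T (Cs P)
  let P : ℕ → Set (∀ i, X i) := fun n => step^[n] ∅
  have hPsucc : ∀ n, P (n + 1) = step (P n) := fun n => Function.iterate_succ_apply' step n ∅
  have hPB : ∀ n, P n ⊆ B := by
    intro n
    induction n with
    | zero => simp [P]
    | succ n ih =>
      rw [hPsucc]
      rintro y (hy | ⟨Fm, _, rfl⟩)
      · exact ih hy
      · exact haB _ _
  -- countability of T c for countable c
  have hT : ∀ c : Set I, c.Countable → (T c).Countable := by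
    intro c hc
    have hS : {F : Finset I | ↑F ⊆ c}.Countable := by
      have h1 : {t : Set I | t.Finite ∧ t ⊆ c}.Countable := countable_setOf_finite_subset hc
      have h2 : {F : Finset I | ↑F ⊆ c}
          = (fun F : Finset I => (↑F : Set I)) ⁻¹' {t : Set I | t.Finite ∧ t ⊆ c} := by
        ext F; simp [Finset.finite_toSet]
      rw [h2]
      exact h1.preimage Finset.coe_injective
    have hsub : T c ⊆ ⋃ F ∈ {F : Finset I | ↑F ⊆ c},
        ({F} : Set (Finset I)) ×ˢ {m : I → ℕ | ∀ i ∉ F, m i = 0} := by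
      rintro ⟨F, m⟩ ⟨h1, h2⟩
      exact mem_biUnion h1 ⟨rfl, h2⟩
    refine Set.Countable.mono hsub (hS.biUnion fun F _ => (countable_singleton F).prod ?_)
    have : {m : I → ℕ | ∀ i ∉ F, m i = 0} ⊆
        Set.range (fun g : (↥F → ℕ) => fun i => if h : i ∈ F then g ⟨i, h⟩ else 0) := by
      intro m hm
      refine ⟨fun j => m ↑j, ?_⟩
      funext i
      by_cases h : i ∈ F
      · simp [h]
      · simp [h, hm i h]
    exact Set.Countable.mono this (Set.countable_range _)
  have hCs : ∀ Q : Set (∀ i, X i), Q.Countable → Q ⊆ B → (Cs Q).Countable := by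
    intro Q hQ hQB
    have : Cs Q = ⋃ y ∈ Q, {i | y i ≠ x i} := by
      ext i; simp [Cs]
    rw [this]
    exact hQ.biUnion fun y hy => hB y (hQB hy)
  have hPcount : ∀ n, (P n).Countable := by
    intro n
    induction n with
    | zero => simp [P]
    | succ n ih =>
      rw [hPsucc]
      exact ih.union ((hT _ (hCs _ ih (hPB n))).image _)
  have hPmono : ∀ n, P n ⊆ P (n + 1) := by
    intro n; rw [hPsucc]; exact subset_union_left
  have hPmono' : ∀ {m n}, m ≤ n → P m ⊆ P n := by
    intro m n h
    induction h with
    | refl => exact subset_rfl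
    | step h ih => exact ih.trans (hPmono _)
  -- the countable coordinate set
  let C : Set I := ⋃ n, Cs (P n)
  have hCcount : C.Countable :=
    countable_iUnion fun n => hCs _ (hPcount n) (hPB n)
  have hsupp : ∀ n, ∀ y ∈ P n, ∀ i, i ∉ C → y i = x i := by
    intro n y hy i hi
    by_contra h
    exact hi (mem_iUnion.2 ⟨n, ⟨y, hy, h⟩⟩)
  -- the countable subproduct
  haveI : Countable ↥C := hCcount.to_subtype
  let r : (∀ i, X i) → (∀ i : ↥C, X ↑i) := fun y i => y ↑i
  have hrx : r x ∈ closure (r '' ⋃ n, P n) := by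
    have hbasis : (𝓝 (r x)).HasBasis
        (fun If : Set ↥C × (↥C → ℕ) => If.1.Finite ∧ ∀ i ∈ If.1, True)
        (fun If => If.1.pi fun i => b ↑i (If.2 i)) := by
      rw [show (𝓝 (r x)) = Filter.pi fun i : ↥C => 𝓝 (x ↑i) from nhds_pi]
      exact Filter.hasBasis_pi fun i : ↥C => (hb ↑i).1
    rw [mem_closure_iff_nhds_basis hbasis]
    rintro ⟨J, m⟩ ⟨hJ, -⟩
    -- J is a finite set of coordinates in C; find a stage n containing all of them
    have hJc : ((↑) '' J : Set I).Finite := hJ.image _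
    have hgex : ∀ i ∈ ((↑) '' J : Set I), ∃ n, i ∈ Cs (P n) := by
      rintro i ⟨j, hjJ, rfl⟩
      rcases mem_iUnion.1 j.2 with ⟨n, hn⟩
      exact ⟨n, hn⟩
    choose! g hg using hgex
    obtain ⟨N, hN⟩ : ∃ N, ∀ i ∈ ((↑) '' J : Set I), g i ≤ N := by
      refine ⟨hJc.toFinset.sup g, fun i hi => ?_⟩
      exact Finset.le_sup (hJc.mem_toFinset.2 hi)
    have hJC : ∀ i ∈ ((↑) '' J : Set I), i ∈ Cs (P N) := by
      intro i hi
      rcases hg i hi with ⟨y, hy, hyx⟩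
      exact ⟨y, hPmono' (hN i hi) hy, hyx⟩
    -- build the finite-support index
    let F : Finset I := hJc.toFinset
    let m' : I → ℕ := fun i => if h : i ∈ C ∧ i ∈ F then m ⟨i, h.1⟩ else 0
    have hFm : (F, m') ∈ T (Cs (P N)) := by
      constructor
      · intro i hi
        exact hJC i (hJc.mem_toFinset.1 hi)
      · intro i hi
        simp only [m', dif_neg (fun h : i ∈ C ∧ i ∈ F => hi h.2)]
    have hay : a F m' ∈ P (N + 1) := by
      rw [hPsucc]
      exact Or.inr ⟨(F, m'), hFm, rfl⟩
    refine ⟨r (a F m'), mem_image_of_mem r (mem_iUnion.2 ⟨N + 1, hay⟩), ?_⟩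
    intro j hjJ
    have hjF : (↑j : I) ∈ F := hJc.mem_toFinset.2 (mem_image_of_mem _ hjJ)
    have h1 : a F m' ↑j ∈ b ↑j (m' ↑j) := haV F m' ↑j hjF
    have h2 : m' ↑j = m j := by
      have hc : (↑j : I) ∈ C ∧ (↑j : I) ∈ F := ⟨j.2, hjF⟩
      simp only [m', dif_pos hc, Subtype.coe_eta]
    rwa [h2] at h1
  -- extract a sequence using first countability of the countable subproduct
  rcases mem_closure_iff_seq_limit.1 hrx with ⟨v, hvmem, hv⟩
  choose u huP huv using hvmem
  refine ⟨u, fun n => ?_, ?_⟩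
  · rcases mem_iUnion.1 (huP n) with ⟨k, hk⟩
    exact hPB k hk
  · rw [tendsto_pi_nhds]
    intro i
    by_cases hi : i ∈ C
    · have : (fun n => u n i) = fun n => v n ⟨i, hi⟩ := by
        funext n
        rw [← huv n]
      rw [this]
      exact tendsto_pi_nhds.1 hv ⟨i, hi⟩
    · have : (fun n => u n i) = fun _ => x i := by
        funext n
        rcases mem_iUnion.1 (huP n) with ⟨k, hk⟩
        exact hsupp k _ hk i hi
      rw [this]
      exact tendsto_const_nhds

theorem stmt8 {I : Type u} {X : I → Type v} [∀ i, TopologicalSpace (X i)]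
    [∀ i, FirstCountableTopology (X i)] (z : ∀ i, X i) :
    FrechetUrysohnSpace {y : ∀ i, X i // {i : I | y i ≠ z i}.Countable} := by
  constructor
  intro A x hx
  rw [closure_subtype] at hx
  have hB : ∀ y ∈ (Subtype.val '' A : Set (∀ i, X i)),
      ({i | y i ≠ (x : ∀ i, X i) i}).Countable := by
    rintro y ⟨w, -, rfl⟩
    refine (w.2.union x.2).mono ?_
    intro i hi
    by_cases h : (w : ∀ i, X i) i = z i
    · exact Or.inr fun hxz => hi (h.trans hxz.symm)
    · exact Or.inl h
  rcases sigma_key _ _ hB hx with ⟨u, huB, hu⟩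
  choose w hwA hwu using huB
  refine ⟨w, hwA, ?_⟩
  rw [IsEmbedding.subtypeVal.isInducing.tendsto_nhds_iff]
  simp only [Function.comp_def, hwu]
  exact hu
end

section
/- Let X be a homogeneous topological space (for every pair of points x, y there is a homeomorphism of X sending x to y), and let Y be a dense subset of X that is an Ascoli space. Then X is an Ascoli space. -/
open Topology Filter

lemma isAscoli_of_homeomorph {A B : Type*} [TopologicalSpace A] [TopologicalSpace B]
    (e : A ≃ₜ B) (hA : IsAscoli A) : IsAscoli B := by
  intro K hK
  let φ : C(B, ℝ) → C(A, ℝ) := fun f => f.comp ⟨e, e.continuous⟩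
  have hφ : Continuous φ := ContinuousMap.continuous_precomp _
  have hE := hA (φ '' K) (hK.image hφ)
  have hψ : Continuous fun p : B × K =>
      ((⟨e.symm p.1, ⟨φ p.2.1, Set.mem_image_of_mem _ p.2.2⟩⟩ : A × (φ '' K))) := by
    refine Continuous.prodMk (e.continuous_symm.comp continuous_fst) ?_
    exact Continuous.subtype_mk (hφ.comp (continuous_subtype_val.comp continuous_snd)) _
  have : Continuous fun p : B × K =>
      (fun q : A × (φ '' K) => (q.2 : C(A, ℝ)) q.1)
        (⟨e.symm p.1, ⟨φ p.2.1, Set.mem_image_of_mem _ p.2.2⟩⟩) := hE.comp hψ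
  convert this using 2 with p
  simp [φ]

lemma isAscoli_of_dense {X : Type*} [TopologicalSpace X]
    (h : ∀ x : X, ∃ D : Set X, x ∈ D ∧ Dense D ∧ IsAscoli D) : IsAscoli X := by
  intro K hK
  rw [continuous_iff_continuousAt]
  rintro ⟨x₀, f₀⟩
  obtain ⟨D, hx₀D, hDdense, hDA⟩ := h x₀
  -- restriction map
  let r : C(X, ℝ) → C(D, ℝ) := fun f => f.restrict D
  have hr : Continuous r := ContinuousMap.continuous_restrict D
  have hE := hDA (r '' K) (hK.image hr)
  rw [ContinuousAt, Metric.tendsto_nhds]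
  intro ε hε
  -- use continuity of eval on D × (r '' K) at the point (x₀, r f₀)
  set p₀ : D × (r '' K) := (⟨x₀, hx₀D⟩, ⟨r f₀.1, Set.mem_image_of_mem _ f₀.2⟩)
  have hEopen : IsOpen {q : D × (r '' K) |
      dist ((q.2 : C(D, ℝ)) q.1) ((f₀ : C(X, ℝ)) x₀) < ε / 2} :=
    (Metric.isOpen_ball (x := (f₀ : C(X, ℝ)) x₀) (ε := ε / 2)).preimage hE
  have hp₀ : p₀ ∈ {q : D × (r '' K) |
      dist ((q.2 : C(D, ℝ)) q.1) ((f₀ : C(X, ℝ)) x₀) < ε / 2} := by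
    simp [p₀, r, hε]
  obtain ⟨U, V, hU, hV, hUm, hVm, hUV⟩ := isOpen_prod_iff.1 hEopen _ _ hp₀
  -- U open in D: get U' open in X
  obtain ⟨U', hU', hU'eq⟩ := isOpen_induced_iff.1 hU
  obtain ⟨V', hV', hV'eq⟩ := isOpen_induced_iff.1 hV
  have hx₀U' : x₀ ∈ U' := by
    have := hUm; rw [← hU'eq] at this; exact this
  have hf₀V' : r f₀.1 ∈ V' := by
    have := hVm; rw [← hV'eq] at this; exact this
  -- key: for f ∈ K with r f ∈ V' and x ∈ U', dist (f x) (f₀ x₀) ≤ ε/2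
  have key : ∀ f : K, r f.1 ∈ V' → ∀ x ∈ U', dist (f.1 x) ((f₀ : C(X, ℝ)) x₀) ≤ ε / 2 := by
    intro f hf x hx
    have hclosed : IsClosed {x : X | dist (f.1 x) ((f₀ : C(X, ℝ)) x₀) ≤ ε / 2} :=
      isClosed_le (by fun_prop) continuous_const
    have hsub : U' ∩ D ⊆ {x : X | dist (f.1 x) ((f₀ : C(X, ℝ)) x₀) ≤ ε / 2} := by
      rintro d ⟨hdU, hdD⟩
      have hdU2 : (⟨d, hdD⟩ : D) ∈ U := by rw [← hU'eq]; exact hdU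
      have hfV : (⟨r f.1, Set.mem_image_of_mem _ f.2⟩ : (r '' K : Set C(D, ℝ))) ∈ V := by
        rw [← hV'eq]; exact hf
      have := hUV (Set.mk_mem_prod hdU2 hfV)
      simp only [Set.mem_setOf_eq] at this ⊢
      exact le_of_lt this
    have hUc : U' ⊆ closure (U' ∩ D) := hDdense.open_subset_closure_inter hU'
    have := hclosed.closure_subset_iff.2 hsub (hUc hx)
    exact this
  -- the neighborhood in X × K
  have hnhds : U' ×ˢ (Subtype.val ⁻¹' (r ⁻¹' V') : Set K) ∈ 𝓝 ((x₀, f₀) : X × K) := by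
    refine prod_mem_nhds (hU'.mem_nhds hx₀U') ?_
    exact ((hV'.preimage hr).preimage continuous_subtype_val).mem_nhds hf₀V'
  filter_upwards [hnhds] with p hp
  rcases hp with ⟨hp1, hp2⟩
  exact lt_of_le_of_lt (key p.2 hp2 p.1 hp1) (by linarith)

theorem stmt9 {X : Type*} [TopologicalSpace X] [T35Space X]
    (hhom : ∀ x y : X, ∃ h : X ≃ₜ X, h x = y)
    (Y : Set X) (hdense : Dense Y) (hY : IsAscoli Y) : IsAscoli X := by
  refine isAscoli_of_dense fun x => ?_
  have : Nonempty X := ⟨x⟩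
  obtain ⟨y₀, hy₀⟩ := hdense.nonempty
  obtain ⟨h, hh⟩ := hhom y₀ x
  refine ⟨h '' Y, ⟨y₀, hy₀, hh⟩, ?_, ?_⟩
  · rw [dense_iff_closure_eq, ← Homeomorph.image_closure, hdense.closure_eq, Set.image_univ,
      h.surjective.range_eq]
  · exact isAscoli_of_homeomorph (h.image Y) hY
end

section
/- If X is a Tychonoff space with only finitely many non-isolated points, then C_p(X) is an Ascoli space. -/
open Topology Filter

section Aux

variable {X : Type*} [TopologicalSpace X]

/-- Basic open-neighborhood criterion in `Cp X`. -/
lemma cp_open_crit {W : Set (Cp X)} (hW : IsOpen W) {f₁ : Cp X} (hf₁ : f₁ ∈ W) :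
    ∃ (S : Finset X) (ε : X → ℝ), (∀ x ∈ S, 0 < ε x) ∧
      ∀ g : Cp X, (∀ x ∈ S, |g.1 x - f₁.1 x| < ε x) → g ∈ W := by
  obtain ⟨U, hU, rfl⟩ := isOpen_induced_iff.mp hW
  obtain ⟨I, u, hu, hsub⟩ := isOpen_pi_iff.mp hU f₁.1 hf₁
  have : ∀ x, ∃ e : ℝ, 0 < e ∧ (x ∈ I → Metric.ball (f₁.1 x) e ⊆ u x) := by
    intro x
    by_cases hx : x ∈ I
    · obtain ⟨e, he, hb⟩ := Metric.isOpen_iff.mp (hu x hx).1 _ (hu x hx).2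
      exact ⟨e, he, fun _ => hb⟩
    · exact ⟨1, one_pos, fun h => absurd h hx⟩
  choose ε hε1 hε2 using this
  refine ⟨I, ε, fun x _ => hε1 x, fun g hg => ?_⟩
  refine hsub fun x hx => hε2 x hx ?_
  rw [Metric.mem_ball, Real.dist_eq]
  exact hg x hx

/-- Bump functions from complete regularity. -/
lemma cp_bump [T35Space X] {x : X} {O : Set X} (hO : IsOpen O) (hx : x ∈ O) :
    ∃ η : X → ℝ, Continuous η ∧ η x = 1 ∧ (∀ y, 0 ≤ η y) ∧ (∀ y, η y ≤ 1) ∧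
      ∀ y, y ∉ O → η y = 0 := by
  obtain ⟨f, hf, hfx, hfK⟩ :=
    CompletelyRegularSpace.completely_regular x Oᶜ hO.isClosed_compl (by simpa)
  refine ⟨fun y => 1 - (f y : ℝ), by continuity, by simp [hfx], ?_, ?_, ?_⟩
  · intro y; have := (f y).2.2; simp only [sub_nonneg]; exact this
  · intro y
    have := (f y).2.1
    show (1:ℝ) - (f y : ℝ) ≤ 1
    linarith
  · intro y hy
    have h1 : f y = 1 := hfK hy
    simp [h1]

open Classical in
lemma cp_indicator_cont [T1Space X] (A : Finset X) (hA : ∀ x ∈ A, IsOpen ({x} : Set X)) :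
    Continuous fun y => if y ∈ (A : Set X) then (1:ℝ) else 0 := by
  have hopen : IsOpen (A : Set X) := by
    have h : (A : Set X) = ⋃ x ∈ A, {x} := by ext y; simp
    rw [h]
    exact isOpen_biUnion fun x hx => hA x hx
  have hclopen : IsClopen (A : Set X) := ⟨(A.finite_toSet).isClosed, hopen⟩
  apply Continuous.if
  · intro a ha
    rw [Set.setOf_mem_eq, hclopen.frontier_eq] at ha
    exact absurd ha (Set.notMem_empty a)
  · exact continuous_const
  · exact continuous_const

variable [T35Space X]

/-- The key step: given any finite control set `T` and `δ > 0`, we can find an element of `W`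
which is `(n+1)δ`-close to `f₀` on `T` and everywhere except a finite set `E` of isolated
points. -/
lemma cp_key_step (hfin : {x : X | ¬IsOpen ({x} : Set X)}.Finite)
    (f₀ : Cp X) (W : Set (Cp X)) (hW : IsOpen W)
    (hcl : ∀ V ∈ 𝓝 f₀, (V ∩ W).Nonempty) (T : Finset X) {δ : ℝ} (hδ : 0 < δ) :
    ∃ (g : Cp X) (E : Finset X), g ∈ W ∧ (∀ x ∈ E, IsOpen ({x} : Set X)) ∧
      (∀ x, x ∉ E → |g.1 x - f₀.1 x| ≤ (hfin.toFinset.card + 1) * δ) ∧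
      (∀ x ∈ T, |g.1 x - f₀.1 x| ≤ (hfin.toFinset.card + 1) * δ) := by
  classical
  set F := hfin.toFinset with hF
  set V : Set (Cp X) := {f | ∀ x ∈ T ∪ F, |f.1 x - f₀.1 x| < δ} with hVdef
  have hVopen : IsOpen V := by
    have h : V = ⋂ x ∈ (T ∪ F), {f : Cp X | |f.1 x - f₀.1 x| < δ} := by
      ext f; simp [hVdef]
    rw [h]
    refine isOpen_biInter_finset fun x _ => ?_
    have h2 : {f : Cp X | |f.1 x - f₀.1 x| < δ}
        = (fun f : Cp X => f.1 x) ⁻¹' Metric.ball (f₀.1 x) δ := by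
      ext f; simp [Real.dist_eq]
    rw [h2]
    exact Metric.isOpen_ball.preimage ((continuous_apply x).comp continuous_subtype_val)
  have hVmem : V ∈ 𝓝 f₀ := hVopen.mem_nhds (by intro x hx; simpa using hδ)
  obtain ⟨f₁, hf₁V, hf₁W⟩ := hcl V hVmem
  obtain ⟨S, ε, hε, hcrit⟩ := cp_open_crit hW hf₁W
  set d : X → ℝ := fun y => f₁.1 y - f₀.1 y with hd
  have hdcont : Continuous d := f₁.2.sub f₀.2
  have hdsmall : ∀ x ∈ T ∪ F, |d x| < δ := hf₁V
  set A : Finset X := S.filter (fun x => IsOpen ({x} : Set X)) with hA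
  have hAiso : ∀ x ∈ A, IsOpen ({x} : Set X) := fun x hx => (Finset.mem_filter.mp hx).2
  -- bumps at the non-isolated points
  have hbump : ∀ x ∈ F, ∃ η : X → ℝ, Continuous η ∧ η x = 1 ∧ (∀ y, 0 ≤ η y) ∧
      (∀ y, η y ≤ 1) ∧
      ∀ y, η y ≠ 0 → (|d y| < δ ∧ y ∉ (A : Set X) ∧ (y ∈ (F : Set X) → y = x)) := by
    intro x hxF
    have hxni : ¬IsOpen ({x} : Set X) := by
      have := hfin.mem_toFinset.mp hxF
      exact this
    set O : Set X := {y | |d y| < δ} \ ((A : Set X) ∪ ((F : Set X) \ {x})) with hO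
    have hOopen : IsOpen O := by
      apply IsOpen.sdiff
      · exact isOpen_lt (continuous_abs.comp hdcont) continuous_const
      · exact (A.finite_toSet.union ((F.finite_toSet).diff)).isClosed
    have hxO : x ∈ O := by
      refine ⟨hdsmall x (Finset.mem_union_right _ hxF), ?_⟩
      rintro (hxA | ⟨-, hne⟩)
      · exact hxni (hAiso x hxA)
      · exact hne rfl
    obtain ⟨η, hc, h1, h0, hle, hout⟩ := cp_bump hOopen hxO
    refine ⟨η, hc, h1, h0, hle, fun y hy => ?_⟩
    have hyO : y ∈ O := by
      by_contra h
      exact hy (hout y h)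
    obtain ⟨hy1, hy2⟩ := hyO
    simp only [Set.mem_union, Set.mem_diff, Set.mem_singleton_iff, not_or] at hy2
    refine ⟨hy1, hy2.1, fun hyF => ?_⟩
    by_contra hne
    exact hy2.2 ⟨hyF, hne⟩
  choose! η hηc hη1 hη0 hηle hηsupp using hbump
  set ψ : X → ℝ := fun y => (if y ∈ (A : Set X) then (1:ℝ) else 0) + ∑ x ∈ F, η x y with hψ
  have hψcont : Continuous ψ :=
    (cp_indicator_cont A hAiso).add (continuous_finset_sum _ fun x hx => hηc x hx)
  set g : Cp X := ⟨fun y => f₀.1 y + d y * ψ y, f₀.2.add (hdcont.mul hψcont)⟩ with hg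
  -- ψ = 1 on S
  have hψS : ∀ x ∈ S, ψ x = 1 := by
    intro x hxS
    by_cases hiso : IsOpen ({x} : Set X)
    · have hxA : x ∈ A := Finset.mem_filter.mpr ⟨hxS, hiso⟩
      have hsum : ∑ x' ∈ F, η x' x = 0 := by
        refine Finset.sum_eq_zero fun x' hx' => ?_
        by_contra hne
        exact (hηsupp x' hx' x hne).2.1 hxA
      simp [hψ, hxA, hsum]
    · have hxF : x ∈ F := hfin.mem_toFinset.mpr hiso
      have hxA : x ∉ A := fun h => hiso (hAiso x h)
      have hsum : ∑ x' ∈ F, η x' x = 1 := by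
        rw [Finset.sum_eq_single_of_mem x hxF]
        · exact hη1 x hxF
        · intro x' hx' hne
          by_contra hne2
          exact hne ((hηsupp x' hx' x hne2).2.2 hxF).symm
      simp [hψ, hxA, hsum]
  have hgW : g ∈ W := by
    refine hcrit g fun x hx => ?_
    have : g.1 x - f₁.1 x = 0 := by
      simp only [hg, hψS x hx, mul_one, hd]
      ring
    rw [this]
    simpa using hε x hx
  -- the pointwise bound
  have hψ0 : ∀ y, 0 ≤ ψ y := by
    intro y
    apply add_nonneg
    · split <;> norm_num
    · exact Finset.sum_nonneg fun x hx => hη0 x hx y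
  have hterm : ∀ y (x : X), x ∈ F → |d y| * η x y ≤ δ := by
    intro y x hx
    by_cases hzero : η x y = 0
    · rw [hzero, mul_zero]; exact le_of_lt hδ
    · have h1 := (hηsupp x hx y hzero).1
      calc |d y| * η x y ≤ δ * 1 :=
            mul_le_mul (le_of_lt h1) (hηle x hx y) (hη0 x hx y) (le_of_lt hδ)
        _ = δ := mul_one δ
  have hbound : ∀ y, |g.1 y - f₀.1 y|
      ≤ |d y| * (if y ∈ (A : Set X) then (1:ℝ) else 0) + (F.card : ℝ) * δ := by
    intro y
    have h1 : g.1 y - f₀.1 y = d y * ψ y := by simp [hg]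
    rw [h1, abs_mul, abs_of_nonneg (hψ0 y), hψ, mul_add, Finset.mul_sum]
    gcongr
    calc ∑ x ∈ F, |d y| * η x y ≤ ∑ _x ∈ F, δ :=
          Finset.sum_le_sum fun x hx => hterm y x hx
      _ = (F.card : ℝ) * δ := by rw [Finset.sum_const, nsmul_eq_mul]
  refine ⟨g, A, hgW, hAiso, ?_, ?_⟩
  · intro x hx
    have := hbound x
    rw [if_neg (by exact_mod_cast hx)] at this
    calc |g.1 x - f₀.1 x| ≤ |d x| * 0 + (F.card : ℝ) * δ := this
      _ = (F.card : ℝ) * δ := by ring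
      _ ≤ ((F.card : ℝ) + 1) * δ := by nlinarith
  · intro x hx
    have h2 := hbound x
    have h3 : |d x| < δ := hdsmall x (Finset.mem_union_left _ hx)
    have h4 : |d x| * (if x ∈ (A : Set X) then (1:ℝ) else 0) ≤ δ := by
      split
      · rw [mul_one]; exact le_of_lt h3
      · rw [mul_zero]; exact le_of_lt hδ
    calc |g.1 x - f₀.1 x| ≤ δ + (F.card : ℝ) * δ := by linarith
      _ = ((F.card : ℝ) + 1) * δ := by ring

/-- `Cp X` is κ-Fréchet–Urysohn at every point when `X` has finitely many non-isolated
points: from any open set whose closure contains `f₀` we can extract a sequence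
converging to `f₀`. -/
lemma cp_kFU (hfin : {x : X | ¬IsOpen ({x} : Set X)}.Finite)
    (f₀ : Cp X) (W : Set (Cp X)) (hW : IsOpen W)
    (hcl : ∀ V ∈ 𝓝 f₀, (V ∩ W).Nonempty) :
    ∃ g : ℕ → Cp X, (∀ k, g k ∈ W) ∧ Tendsto g atTop (𝓝 f₀) := by
  classical
  set C : ℝ := (hfin.toFinset.card + 1 : ℝ) with hC
  have key : ∀ (T : Finset X) (k : ℕ), ∃ (g : Cp X) (E : Finset X),
      g ∈ W ∧ (∀ x ∈ E, IsOpen ({x} : Set X)) ∧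
      (∀ x, x ∉ E → |g.1 x - f₀.1 x| ≤ C * (1/((k:ℝ)+1))) ∧
      (∀ x ∈ T, |g.1 x - f₀.1 x| ≤ C * (1/((k:ℝ)+1))) := by
    intro T k
    have hδ : (0:ℝ) < 1/((k:ℝ)+1) := by positivity
    obtain ⟨g, E, h1, h2, h3, h4⟩ := cp_key_step hfin f₀ W hW hcl T hδ
    exact ⟨g, E, h1, h2, fun x hx => by simpa [hC, mul_comm] using h3 x hx,
      fun x hx => by simpa [hC, mul_comm] using h4 x hx⟩
  choose gf Ef h1 h2 h3 h4 using key
  let T : ℕ → Finset X := fun k => Nat.rec ∅ (fun j Tj => Tj ∪ Ef Tj j) k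
  have hTsucc : ∀ k, T (k+1) = T k ∪ Ef (T k) k := fun k => rfl
  have hTmono : ∀ {j k}, j ≤ k → T j ⊆ T k := by
    intro j k hjk
    induction k with
    | zero => rw [Nat.le_zero.mp hjk]
    | succ n ih =>
      rcases Nat.lt_or_ge j (n+1) with h | h
      · exact (ih (Nat.lt_succ_iff.mp h)).trans (by rw [hTsucc]; exact Finset.subset_union_left)
      · rw [Nat.le_antisymm hjk h]
  set g : ℕ → Cp X := fun k => gf (T k) k with hgdef
  refine ⟨g, fun k => h1 _ _, ?_⟩
  have hbound : ∀ x, ∀ᶠ k in atTop, |(g k).1 x - f₀.1 x| ≤ C * (1/((k:ℝ)+1)) := by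
    intro x
    rcases Classical.em (∃ j, x ∈ T j) with hex | hex
    · obtain ⟨j, hj⟩ := hex
      filter_upwards [eventually_ge_atTop j] with k hk
      exact h4 (T k) k x (hTmono hk hj)
    · push_neg at hex
      filter_upwards with k
      refine h3 (T k) k x fun hxE => ?_
      exact hex (k+1) (by rw [hTsucc]; exact Finset.mem_union_right _ hxE)
  rw [tendsto_subtype_rng, tendsto_pi_nhds]
  intro x
  rw [tendsto_iff_dist_tendsto_zero]
  have hlim : Tendsto (fun k : ℕ => C * (1/((k:ℝ)+1))) atTop (𝓝 0) := by
    simpa using tendsto_one_div_add_atTop_nhds_zero_nat.const_mul C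
  refine squeeze_zero' (Filter.Eventually.of_forall fun k => dist_nonneg) ?_ hlim
  filter_upwards [hbound x] with k hk
  rwa [Real.dist_eq]

/-- Every compact subset of `C(Cp X, ℝ)` (compact-open topology) is equicontinuous. -/
lemma cp_equicont (hfin : {x : X | ¬IsOpen ({x} : Set X)}.Finite)
    {K : Set C(Cp X, ℝ)} (hK : IsCompact K) (f₀ : Cp X) {ε : ℝ} (hε : 0 < ε) :
    ∃ V ∈ 𝓝 f₀, ∀ h ∈ K, ∀ f ∈ V, |h f - h f₀| < ε := by
  by_contra hc
  push_neg at hc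
  set W : Set (Cp X) := ⋃ h ∈ K, {f | ε/2 < |h f - h f₀|} with hWdef
  have hWopen : IsOpen W := by
    refine isOpen_biUnion fun h _ => ?_
    exact isOpen_lt continuous_const
      (continuous_abs.comp ((h.continuous).sub continuous_const))
  have hcl : ∀ V ∈ 𝓝 f₀, (V ∩ W).Nonempty := by
    intro V hV
    obtain ⟨h, hhK, f, hfV, hge⟩ := hc V hV
    refine ⟨f, hfV, ?_⟩
    rw [hWdef]
    exact Set.mem_biUnion hhK (lt_of_lt_of_le (half_lt_self hε) hge)
  obtain ⟨g, hgW, hgt⟩ := cp_kFU hfin f₀ W hWopen hcl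
  set Q : Set (Cp X) := insert f₀ (Set.range g) with hQdef
  have hQc : IsCompact Q := hgt.isCompact_insert_range
  haveI : CompactSpace Q := isCompact_iff_compactSpace.mp hQc
  haveI : CompactSpace K := isCompact_iff_compactSpace.mp hK
  have hev : Continuous fun p : Q × K => (p.2 : C(Cp X, ℝ)) (p.1 : Cp X) := by
    have h1 : Continuous fun p : Q × K => ((p.2 : C(Cp X, ℝ)).restrict Q) :=
      ((ContinuousMap.continuous_restrict Q).comp continuous_subtype_val).comp continuous_snd
    exact continuous_eval.comp (h1.prodMk continuous_fst)
  set m : Q × K → ℝ := fun p => |(p.2 : C(Cp X, ℝ)) (p.1 : Cp X) - (p.2 : C(Cp X, ℝ)) f₀|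
    with hmdef
  have hm : Continuous m := by
    apply continuous_abs.comp
    exact hev.sub ((continuous_eval_const f₀).comp
      (continuous_subtype_val.comp continuous_snd))
  have hAc : IsCompact (m ⁻¹' Set.Ici (ε/2)) := (isClosed_Ici.preimage hm).isCompact
  have hproj : IsClosed (Prod.fst '' (m ⁻¹' Set.Ici (ε/2))) :=
    (hAc.image continuous_fst).isClosed
  have hmemQ : ∀ k, g k ∈ Q := fun k => Set.mem_insert_of_mem _ ⟨k, rfl⟩
  have hgk : ∀ k, (⟨g k, hmemQ k⟩ : Q) ∈ Prod.fst '' (m ⁻¹' Set.Ici (ε/2)) := by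
    intro k
    have := hgW k
    rw [hWdef, Set.mem_iUnion₂] at this
    obtain ⟨h, hhK, hlt⟩ := this
    exact ⟨(⟨g k, hmemQ k⟩, ⟨h, hhK⟩), Set.mem_preimage.mpr (Set.mem_Ici.mpr hlt.le), rfl⟩
  have htend : Tendsto (fun k => (⟨g k, hmemQ k⟩ : Q)) atTop
      (𝓝 ⟨f₀, Set.mem_insert _ _⟩) := by
    rw [tendsto_subtype_rng]; exact hgt
  have hf₀mem := hproj.mem_of_tendsto htend (Filter.Eventually.of_forall hgk)
  obtain ⟨⟨q, h⟩, hmem, heq⟩ := hf₀mem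
  have : ε/2 ≤ m (q, h) := hmem
  rw [hmdef] at this
  simp only at this
  have hq : (q : Cp X) = f₀ := congrArg Subtype.val heq
  rw [hq] at this
  simp at this
  linarith

end Aux

theorem stmt10 {X : Type*} [TopologicalSpace X] [T35Space X]
    (hfin : {x : X | ¬IsOpen ({x} : Set X)}.Finite) : IsAscoli (Cp X) := by
  intro K hK
  rw [continuous_iff_continuousAt]
  rintro ⟨f₀, h₀⟩
  rw [ContinuousAt, Metric.tendsto_nhds]
  intro ε hε
  obtain ⟨V, hV, hVp⟩ := cp_equicont hfin hK f₀ (half_pos hε)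
  have hcont2 : Continuous fun h : K => (h : C(Cp X, ℝ)) f₀ :=
    (continuous_eval_const f₀).comp continuous_subtype_val
  have hW2 : {h : K | dist ((h : C(Cp X, ℝ)) f₀) ((h₀ : C(Cp X, ℝ)) f₀) < ε/2} ∈ 𝓝 h₀ := by
    have := (hcont2.tendsto h₀) (Metric.ball_mem_nhds ((h₀ : C(Cp X, ℝ)) f₀) (half_pos hε))
    exact this
  filter_upwards [prod_mem_nhds hV hW2] with p hp
  have h1 : |(p.2 : C(Cp X, ℝ)) p.1 - (p.2 : C(Cp X, ℝ)) f₀| < ε/2 :=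
    hVp p.2 p.2.2 p.1 hp.1
  have h2 : dist ((p.2 : C(Cp X, ℝ)) f₀) ((h₀ : C(Cp X, ℝ)) f₀) < ε/2 := hp.2
  calc dist ((p.2 : C(Cp X, ℝ)) p.1) ((h₀ : C(Cp X, ℝ)) f₀)
      ≤ dist ((p.2 : C(Cp X, ℝ)) p.1) ((p.2 : C(Cp X, ℝ)) f₀)
        + dist ((p.2 : C(Cp X, ℝ)) f₀) ((h₀ : C(Cp X, ℝ)) f₀) := dist_triangle _ _ _
    _ < ε/2 + ε/2 := by rw [Real.dist_eq] at *; exact add_lt_add h1 h2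
    _ = ε := add_halves ε
end

section
/- If X is a scattered stratifiable space, then C_p(X) is an Ascoli space. -/
open Topology Filter

/-- A regular space is stratifiable if there is an assignment `G` of open sets to
closed sets as below. -/
def Stratifiable (X : Type*) [TopologicalSpace X] : Prop :=
  RegularSpace X ∧ ∃ G : ℕ → Set X → Set X,
    (∀ n F, IsClosed F → IsOpen (G n F) ∧ F ⊆ G n F) ∧
    (∀ F, IsClosed F → F = ⋂ n, closure (G n F)) ∧
    (∀ n F F', IsClosed F → IsClosed F' → F ⊆ F' → G n F ⊆ G n F')

/-! ### Auxiliary material: Cantor–Bendixson derivatives and rank -/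

section CB

universe u

variable {X : Type u} [TopologicalSpace X]

/-- The set of non-isolated points of `A`. -/
def dSet (A : Set X) : Set X := {x | x ∈ A ∧ x ∈ closure (A \ {x})}

lemma dSet_subset (A : Set X) : dSet A ⊆ A := fun _ hx => hx.1

lemma isClosed_dSet {A : Set X} (hA : IsClosed A) : IsClosed (dSet A) := by
  rw [← isOpen_compl_iff, isOpen_iff_mem_nhds]
  intro x hx
  by_cases hxA : x ∈ A
  · have hxc : x ∉ closure (A \ {x}) := fun h => hx ⟨hxA, h⟩
    refine Filter.mem_of_superset (isClosed_closure.isOpen_compl.mem_nhds hxc) ?_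
    intro y hy hyD
    rcases eq_or_ne y x with rfl | hne
    · exact hx hyD
    · exact hy (subset_closure ⟨hyD.1, hne⟩)
  · exact Filter.mem_of_superset (hA.isOpen_compl.mem_nhds hxA) fun y hy hyD => hy hyD.1

/-- Transfinite Cantor–Bendixson residuals. -/
noncomputable def cbR (α : Ordinal.{u}) : Set X :=
  ⋂ β : Set.Iio α, dSet (cbR β.1)
termination_by α
decreasing_by exact β.2

lemma isClosed_cbR (α : Ordinal.{u}) : IsClosed (cbR (X := X) α) := by
  induction α using Ordinal.induction with
  | h α ih =>
    rw [cbR]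
    exact isClosed_iInter fun β => isClosed_dSet (ih β.1 β.2)

lemma cbR_antitone {α β : Ordinal.{u}} (h : α ≤ β) : cbR (X := X) β ⊆ cbR α := by
  intro x hx
  rw [cbR] at hx ⊢
  exact Set.mem_iInter.2 fun γ => Set.mem_iInter.1 hx ⟨γ.1, lt_of_lt_of_le γ.2 h⟩

lemma cbR_succ_subset (α : Ordinal.{u}) :
    cbR (X := X) (Order.succ α) ⊆ dSet (cbR α) := by
  intro x hx
  rw [cbR] at hx
  exact Set.mem_iInter.1 hx ⟨α, Order.lt_succ α⟩

lemma exists_not_mem_cbR (hscat : IsScattered X) (x : X) :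
    ∃ α : Ordinal.{u}, x ∉ cbR α := by
  classical
  by_contra hx
  push_neg at hx
  set S : Set X := {y | ∀ α : Ordinal.{u}, y ∈ cbR α} with hS
  have hxS : x ∈ S := hx
  set c : X → Ordinal.{u} := fun y =>
    if h : ∃ α : Ordinal.{u}, y ∉ cbR α then h.choose else 0 with hc
  have hbdd : BddAbove (Set.range c) := Ordinal.bddAbove_range c
  set α₀ : Ordinal.{u} := ⨆ y, c y with hα₀
  have hsub : cbR α₀ ⊆ S := by
    intro z hz
    by_contra hzS
    have hzex : ∃ α : Ordinal.{u}, z ∉ cbR α := by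
      simpa [hS] using hzS
    have h1 : z ∉ cbR (c z) := by
      rw [hc]; simp only [hzex, dif_pos]; exact hzex.choose_spec
    exact h1 (cbR_antitone (le_ciSup hbdd z) hz)
  have hsup : S ⊆ cbR α₀ := fun z hz => hz α₀
  have hSd : S ⊆ dSet S := by
    intro z hz
    have h1 : z ∈ cbR (Order.succ α₀) := hz _
    have h2 := cbR_succ_subset (X := X) α₀ h1
    have : cbR (X := X) α₀ = S := le_antisymm hsub hsup
    rwa [this] at h2
  obtain ⟨a, haS, U, hU, hUS⟩ := hscat S ⟨x, hxS⟩
  have ha : a ∈ closure (S \ {a}) := (hSd haS).2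
  have haU : a ∈ U := by
    have : a ∈ U ∩ S := by rw [hUS]; rfl
    exact this.1
  obtain ⟨y, hyU, hyS, hyne⟩ :=
    (mem_closure_iff.1 ha) U hU haU
  have : y ∈ U ∩ S := ⟨hyU, hyS⟩
  rw [hUS] at this
  exact hyne this

/-- The Cantor–Bendixson rank of a point. -/
noncomputable def cbRank (x : X) : Ordinal.{u} := sInf {α | x ∉ dSet (cbR α)}

lemma cbRank_spec (hscat : IsScattered X) (x : X) : x ∉ dSet (cbR (cbRank x)) := by
  have hne : {α : Ordinal.{u} | x ∉ dSet (cbR α)}.Nonempty := by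
    obtain ⟨α, hα⟩ := exists_not_mem_cbR hscat x
    exact ⟨α, fun h => hα (dSet_subset _ h)⟩
  exact csInf_mem hne

lemma mem_dSet_of_lt_cbRank {x : X} {β : Ordinal.{u}} (hβ : β < cbRank x) :
    x ∈ dSet (cbR β) := by
  by_contra h
  exact absurd (csInf_le (OrderBot.bddBelow _) (by exact h : β ∈ {α | x ∉ dSet (cbR α)}))
    (not_le_of_gt hβ)

lemma mem_cbR_cbRank (x : X) : x ∈ cbR (cbRank x) := by
  rw [cbR]
  exact Set.mem_iInter.2 fun β => mem_dSet_of_lt_cbRank β.2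

lemma mem_cbR_iff (hscat : IsScattered X) {x : X} {α : Ordinal.{u}} :
    x ∈ cbR α ↔ α ≤ cbRank x := by
  constructor
  · intro hx
    by_contra h
    push_neg at h
    have h1 : cbR (X := X) α ⊆ cbR (Order.succ (cbRank x)) :=
      cbR_antitone (Order.succ_le_of_lt h)
    exact cbRank_spec hscat x (cbR_succ_subset _ (h1 hx))
  · intro h
    exact cbR_antitone h (mem_cbR_cbRank x)

lemma isolation (hscat : IsScattered X) (x : X) :
    ∃ W : Set X, IsOpen W ∧ x ∈ W ∧ ∀ z ∈ W, z ≠ x → cbRank z < cbRank x := by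
  refine ⟨(closure (cbR (cbRank x) \ {x}))ᶜ, isClosed_closure.isOpen_compl, ?_, ?_⟩
  · intro hx
    exact cbRank_spec hscat x ⟨mem_cbR_cbRank x, hx⟩
  · intro z hz hne
    by_contra h
    push_neg at h
    have h1 : z ∈ cbR (cbRank x) :=
      cbR_antitone h (mem_cbR_cbRank z)
    exact hz (subset_closure ⟨h1, hne⟩)

/-- Key point-finiteness lemma for scattered stratifiable spaces. -/
lemma key_lemma [T1Space X] (hscat : IsScattered X) (hstrat : Stratifiable X)
    (B : ℕ → Finset X) :
    ∃ U : ℕ → Set X, (∀ n, IsOpen (U n)) ∧ (∀ n, ↑(B n) ⊆ U n) ∧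
      ∀ z : X, z ∉ (⋃ n, ((B n : Set X))) → {n | z ∈ U n}.Finite := by
  classical
  obtain ⟨-, G, hG1, hG2, hG3⟩ := hstrat
  set G' : ℕ → Set X → Set X := fun n F => ⋂ k ∈ Finset.range (n + 1), G k F with hG'def
  have hG'open : ∀ n F, IsClosed F → IsOpen (G' n F) := fun n F hF =>
    isOpen_biInter_finset fun k _ => (hG1 k F hF).1
  have hG'sub : ∀ n F, IsClosed F → F ⊆ G' n F := fun n F hF =>
    Set.subset_iInter₂ fun k _ => (hG1 k F hF).2
  have hG'mono : ∀ n F F', IsClosed F → IsClosed F' → F ⊆ F' → G' n F ⊆ G' n F' := by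
    intro n F F' hF hF' hFF'
    exact Set.iInter₂_mono fun k _ => hG3 k F F' hF hF' hFF'
  have hG'anti : ∀ m n F, m ≤ n → G' n F ⊆ G' m F := by
    intro m n F hmn
    refine Set.iInter₂_mono' fun k hk => ⟨k, ?_, subset_rfl⟩
    simp only [Finset.mem_range] at hk ⊢
    omega
  have hG'inter : ∀ F, IsClosed F → (⋂ n, closure (G' n F)) ⊆ F := by
    intro F hF
    have h1 : (⋂ n, closure (G' n F)) ⊆ ⋂ n, closure (G n F) := by
      refine Set.iInter_mono fun n => closure_mono ?_
      refine Set.iInter₂_subset n ?_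
      simp
    rw [← hG2 F hF] at h1
    exact h1
  choose W hWopen hWmem hWrank using fun x => isolation hscat x
  refine ⟨fun n => ⋃ x ∈ B n, (W x ∩ G' n {x}), ?_, ?_, ?_⟩
  · intro n
    exact isOpen_biUnion fun x _ => (hWopen x).inter (hG'open n {x} isClosed_singleton)
  · intro n x hx
    exact Set.mem_biUnion hx ⟨hWmem x, hG'sub n {x} isClosed_singleton rfl⟩
  · intro z hz
    by_contra hfin
    set T := {n | z ∈ ⋃ x ∈ B n, (W x ∩ G' n {x})} with hTdef
    have hT : T.Infinite := hfin
    have hchoice : ∀ n ∈ T, ∃ x, x ∈ B n ∧ z ∈ W x ∧ z ∈ G' n {x} := by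
      intro n hn
      obtain ⟨x, hxB, hxz⟩ := Set.mem_iUnion₂.1 hn
      exact ⟨x, hxB, hxz.1, hxz.2⟩
    set xf : ℕ → X := fun n => if h : n ∈ T then (hchoice n h).choose else z with hxf
    have hxfB : ∀ n ∈ T, xf n ∈ B n := by
      intro n hn
      rw [hxf]; simp only [hn, dif_pos]
      exact (hchoice n hn).choose_spec.1
    have hxfW : ∀ n ∈ T, z ∈ W (xf n) := by
      intro n hn
      rw [hxf]; simp only [hn, dif_pos]
      exact (hchoice n hn).choose_spec.2.1
    have hxfG : ∀ n ∈ T, z ∈ G' n {xf n} := by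
      intro n hn
      rw [hxf]; simp only [hn, dif_pos]
      exact (hchoice n hn).choose_spec.2.2
    set E : Set X := xf '' T with hE
    set F : Set X := closure E with hF
    have hFclosed : IsClosed F := isClosed_closure
    -- every point of E has bigger rank than z
    have hrank : ∀ n ∈ T, Order.succ (cbRank z) ≤ cbRank (xf n) := by
      intro n hn
      have hne : z ≠ xf n := by
        intro h
        exact hz (Set.mem_iUnion.2 ⟨n, by rw [h]; exact_mod_cast hxfB n hn⟩)
      exact Order.succ_le_of_lt (hWrank (xf n) z (hxfW n hn) hne)
    have hEsub : E ⊆ cbR (Order.succ (cbRank z)) := by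
      rintro y ⟨n, hn, rfl⟩
      exact (mem_cbR_iff hscat).2 (hrank n hn)
    -- z is in every G' m F
    have hzG : ∀ m, z ∈ G' m F := by
      intro m
      have hex : ∃ n ∈ T, m ≤ n := by
        by_contra hcon
        push_neg at hcon
        exact hT ((Set.finite_Iio m).subset fun n hn => hcon n hn)
      obtain ⟨n, hn, hmn⟩ := hex
      have h1 : G' n {xf n} ⊆ G' n F :=
        hG'mono n {xf n} F isClosed_singleton hFclosed
          (by simp only [Set.singleton_subset_iff]; exact subset_closure ⟨n, hn, rfl⟩)
      exact hG'anti m n F hmn (h1 (hxfG n hn))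
    have hzF : z ∈ F := hG'inter F hFclosed (Set.mem_iInter.2 fun m => subset_closure (hzG m))
    have hzR : z ∈ cbR (Order.succ (cbRank z)) := by
      have : F ⊆ cbR (Order.succ (cbRank z)) :=
        closure_minimal hEsub (isClosed_cbR _)
      exact this hzF
    have := (mem_cbR_iff hscat).1 hzR
    exact absurd this (by simpa using (Order.lt_succ (cbRank z)).not_le)

end CB

/-! ### Auxiliary material about the topology of `Cp X` -/

section CpAux

variable {X : Type*} [TopologicalSpace X]

lemma finset_pos_min {α : Type*} (s : Finset α) (f : α → ℝ) (hf : ∀ x ∈ s, 0 < f x) :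
    ∃ δ : ℝ, 0 < δ ∧ ∀ x ∈ s, δ ≤ f x := by
  classical
  induction s using Finset.induction_on with
  | empty => exact ⟨1, one_pos, by simp⟩
  | @insert a s ha ih =>
    obtain ⟨δ, hδ, hle⟩ := ih fun x hx => hf x (Finset.mem_insert_of_mem hx)
    refine ⟨min δ (f a), lt_min hδ (hf a (Finset.mem_insert_self a s)), ?_⟩
    intro x hx
    rcases Finset.mem_insert.1 hx with rfl | h
    · exact min_le_right _ _
    · exact (min_le_left _ _).trans (hle x h)

lemma cp_mem_nhds {g : Cp X} {V : Set (Cp X)} (hV : V ∈ 𝓝 g) :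
    ∃ (A : Finset X) (δ : ℝ), 0 < δ ∧
      {h : Cp X | ∀ x ∈ A, |h.1 x - g.1 x| < δ} ⊆ V := by
  classical
  rw [(IsEmbedding.subtypeVal (p := fun f : X → ℝ => Continuous f)).isInducing.nhds_eq_comap g, mem_comap] at hV
  obtain ⟨W, hW, hWV⟩ := hV
  rw [mem_nhds_iff] at hW
  obtain ⟨O, hOW, hOopen, hgO⟩ := hW
  obtain ⟨I, u, hu, hIu⟩ := isOpen_pi_iff.1 hOopen g.1 hgO
  have hball : ∀ x ∈ I, ∃ δ : ℝ, 0 < δ ∧ Metric.ball (g.1 x) δ ⊆ u x := by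
    intro x hx
    exact Metric.isOpen_iff.1 (hu x hx).1 _ (hu x hx).2
  choose δf hδfpos hδfsub using hball
  set δfun : X → ℝ := fun x => if h : x ∈ I then δf x h else 1 with hδfun
  obtain ⟨δ, hδpos, hδle⟩ := finset_pos_min I δfun
    (by intro x hx; rw [hδfun]; simp only [hx, dif_pos]; exact hδfpos x hx)
  refine ⟨I, δ, hδpos, ?_⟩
  intro h hh
  apply hWV
  apply hOW
  apply hIu
  intro x hx
  apply hδfsub x hx
  rw [Metric.mem_ball, Real.dist_eq]
  have h1 := hh x hx
  have h2 : δ ≤ δf x hx := by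
    have hxI : x ∈ I := hx
    have h3 := hδle x hxI
    rw [hδfun] at h3
    simp only at h3
    rwa [dif_pos hxI] at h3
  linarith

lemma cp_basic_open (A : Finset X) (c : X → ℝ) (δ : ℝ) :
    IsOpen {h : Cp X | ∀ x ∈ A, |h.1 x - c x| < δ} := by
  have : {h : Cp X | ∀ x ∈ A, |h.1 x - c x| < δ} =
      ⋂ x ∈ A, {h : Cp X | |h.1 x - c x| < δ} := by
    ext h; simp
  rw [this]
  refine isOpen_biInter_finset fun x _ => ?_
  exact isOpen_lt (((continuous_apply x).comp continuous_subtype_val).sub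
    continuous_const).abs continuous_const

end CpAux

theorem stmt12 {X : Type*} [TopologicalSpace X] [T35Space X]
    (hscat : IsScattered X) (hstrat : Stratifiable X) : IsAscoli (Cp X) := by
  classical
  intro K hK
  -- Main step: K is equicontinuous at every point of Cp X
  have equi : ∀ (g : Cp X) (ε : ℝ), 0 < ε →
      ∃ V ∈ 𝓝 g, ∀ f ∈ K, ∀ h ∈ V, |f h - f g| < ε := by
    intro g ε hε
    by_contra hcon
    push_neg at hcon
    -- skolemize the failure of equicontinuity
    have step : ∀ (A : Finset X) (m : ℕ), ∃ (f : C(Cp X, ℝ)) (h : Cp X),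
        f ∈ K ∧ (∀ x ∈ A, |h.1 x - g.1 x| < 1 / (m + 1)) ∧ ε ≤ |f h - f g| := by
      intro A m
      have hpos : (0 : ℝ) < 1 / (m + 1) := by positivity
      have hVnh : {h : Cp X | ∀ x ∈ A, |h.1 x - g.1 x| < 1 / (m + 1)} ∈ 𝓝 g :=
        (cp_basic_open A g.1 _).mem_nhds (by intro x _; simpa using hpos)
      obtain ⟨f, hfK, h, hhV, hineq⟩ := hcon _ hVnh
      exact ⟨f, h, hfK, hhV, hineq⟩
    choose F H hFK hsmall hbig using step
    -- continuity data for each F A m at H A m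
    have cont : ∀ (A : Finset X) (m : ℕ), ∃ (B : Finset X) (δ : ℝ), 0 < δ ∧
        ∀ h' : Cp X, (∀ x ∈ B, |h'.1 x - (H A m).1 x| < δ) →
          |F A m h' - F A m (H A m)| < ε / 4 := by
      intro A m
      have hmem : {h' : Cp X | |F A m h' - F A m (H A m)| < ε / 4} ∈ 𝓝 (H A m) := by
        refine (isOpen_lt (((F A m).continuous.sub continuous_const).abs)
          continuous_const).mem_nhds ?_
        simp only [Set.mem_setOf_eq, sub_self, abs_zero]
        simpa using div_pos hε (by norm_num : (0:ℝ) < 4)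
      obtain ⟨B, δ, hδ, hsub⟩ := cp_mem_nhds hmem
      exact ⟨B, δ, hδ, fun h' hh' => hsub hh'⟩
    choose Bf δf hδfpos hBf using cont
    -- the recursion
    set P : ℕ → Finset X := fun n => Nat.rec ∅ (fun k Pk => Pk ∪ Bf Pk k) n with hPdef
    have hPsucc : ∀ k, P (k + 1) = P k ∪ Bf (P k) k := fun k => rfl
    have hPmono : ∀ {m n : ℕ}, m ≤ n → P m ⊆ P n := by
      intro m n h
      induction h with
      | refl => exact subset_rfl
      | step _ ih =>
        refine ih.trans ?_
        rw [hPsucc]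
        exact Finset.subset_union_left
    set fn : ℕ → C(Cp X, ℝ) := fun n => F (P n) n with hfn
    set hn : ℕ → Cp X := fun n => H (P n) n with hhn
    set Bn : ℕ → Finset X := fun n => Bf (P n) n with hBn
    have hBnP : ∀ k n, k < n → (Bn k : Set X) ⊆ (P n : Set X) := by
      intro k n hkn
      have h1 : Bn k ⊆ P (k + 1) := by
        rw [hPsucc]; exact Finset.subset_union_right
      exact_mod_cast h1.trans (hPmono hkn)
    -- apply the key point-finiteness lemma
    obtain ⟨U, hUopen, hUsub, hUpf⟩ := key_lemma hscat hstrat Bn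
    -- bump functions
    have bump : ∀ n, ∃ φ : X → ℝ, Continuous φ ∧ (∀ x, 0 ≤ φ x ∧ φ x ≤ 1) ∧
        (∀ x ∈ Bn n, φ x = 1) ∧ (∀ x, x ∉ U n → φ x = 0) := by
      intro n
      have hcr : ∀ x : X, x ∈ Bn n → ∃ ψ : X → ℝ, Continuous ψ ∧ ψ x = 0 ∧
          (∀ y, y ∉ U n → ψ y = 1) ∧ ∀ y, 0 ≤ ψ y ∧ ψ y ≤ 1 := by
        intro x hx
        obtain ⟨f, hfc, hfx, hfU⟩ := CompletelyRegularSpace.completely_regular x (U n)ᶜ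
          (hUopen n).isClosed_compl (by simpa using hUsub n hx)
        refine ⟨fun y => (f y : ℝ), hfc.subtype_val, by simp [hfx], ?_, ?_⟩
        · intro y hy
          have h1 : f y = (1 : X → ↑unitInterval) y := hfU hy
          dsimp only
          rw [h1]
          simp
        · exact fun y => ⟨(f y).2.1, (f y).2.2⟩
      choose ψ hψc hψx hψU hψ01 using hcr
      refine ⟨fun y => 1 - ∏ x ∈ (Bn n).attach, ψ x.1 x.2 y, ?_, ?_, ?_, ?_⟩
      · exact continuous_const.sub (continuous_finset_prod _ fun i _ => hψc i.1 i.2)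
      · intro y
        dsimp only
        constructor
        · have : ∏ x ∈ (Bn n).attach, ψ x.1 x.2 y ≤ 1 :=
            Finset.prod_le_one (fun i _ => (hψ01 i.1 i.2 y).1) (fun i _ => (hψ01 i.1 i.2 y).2)
          linarith
        · have : 0 ≤ ∏ x ∈ (Bn n).attach, ψ x.1 x.2 y :=
            Finset.prod_nonneg fun i _ => (hψ01 i.1 i.2 y).1
          linarith
      · intro x hx
        have h1 : ∏ y ∈ (Bn n).attach, ψ y.1 y.2 x = 0 :=
          Finset.prod_eq_zero (Finset.mem_attach _ ⟨x, hx⟩) (hψx x hx)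
        dsimp only
        rw [h1]; ring
      · intro x hx
        have h1 : ∏ y ∈ (Bn n).attach, ψ y.1 y.2 x = 1 :=
          Finset.prod_eq_one fun i _ => hψU i.1 i.2 x hx
        dsimp only
        rw [h1]; ring
    choose φ hφc hφ01 hφ1 hφ0 using bump
    -- the modified sequence
    set h' : ℕ → Cp X := fun n =>
      ⟨fun x => g.1 x + ((hn n).1 x - g.1 x) * φ n x,
        g.2.add (((hn n).2.sub g.2).mul (hφc n))⟩ with hh'
    have hh'B : ∀ n, ∀ x ∈ Bn n, (h' n).1 x = (hn n).1 x := by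
      intro n x hx
      show g.1 x + ((hn n).1 x - g.1 x) * φ n x = (hn n).1 x
      rw [hφ1 n x hx]; ring
    have hh'U : ∀ n, ∀ x, x ∉ U n → (h' n).1 x = g.1 x := by
      intro n x hx
      show g.1 x + ((hn n).1 x - g.1 x) * φ n x = g.1 x
      rw [hφ0 n x hx]; ring
    have hh'le : ∀ n x, |(h' n).1 x - g.1 x| ≤ |(hn n).1 x - g.1 x| := by
      intro n x
      show |g.1 x + ((hn n).1 x - g.1 x) * φ n x - g.1 x| ≤ _
      have h1 : g.1 x + ((hn n).1 x - g.1 x) * φ n x - g.1 x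
          = ((hn n).1 x - g.1 x) * φ n x := by ring
      rw [h1, abs_mul]
      calc |(hn n).1 x - g.1 x| * |φ n x| ≤ |(hn n).1 x - g.1 x| * 1 := by
            refine mul_le_mul_of_nonneg_left ?_ (abs_nonneg _)
            rw [abs_le]
            exact ⟨by linarith [(hφ01 n x).1], (hφ01 n x).2⟩
        _ = _ := mul_one _
    -- convergence h' → g
    have hconv : Tendsto h' atTop (𝓝 g) := by
      rw [tendsto_subtype_rng]
      rw [tendsto_pi_nhds]
      intro x
      by_cases hx : x ∈ ⋃ k, ((Bn k : Set X))
      · obtain ⟨k, hk⟩ := Set.mem_iUnion.1 hx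
        have hzero : Tendsto (fun n => (h' n).1 x - g.1 x) atTop (𝓝 0) := by
          rw [tendsto_zero_iff_abs_tendsto_zero]
          refine squeeze_zero' (Eventually.of_forall fun n => abs_nonneg _) ?_
            tendsto_one_div_add_atTop_nhds_zero_nat
          filter_upwards [eventually_gt_atTop k] with n hkn
          have hxP : x ∈ P n := hBnP k n hkn hk
          have h1 := hsmall (P n) n x hxP
          calc |(h' n).1 x - g.1 x| ≤ |(hn n).1 x - g.1 x| := hh'le n x
            _ ≤ 1 / (n + 1) := le_of_lt h1
        have := hzero.add (tendsto_const_nhds : Tendsto (fun _ : ℕ => g.1 x) atTop (𝓝 (g.1 x)))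
        simpa [add_comm] using this
      · have hfin : {n | x ∈ U n}.Finite := hUpf x hx
        have hev : ∀ᶠ n in atTop, (h' n).1 x = g.1 x := by
          have h1 : ∀ᶠ n in cofinite, x ∉ U n := hfin.eventually_cofinite_notMem
          rw [Nat.cofinite_eq_atTop] at h1
          filter_upwards [h1] with n hn
          exact hh'U n x hn
        exact Tendsto.congr' (hev.mono fun n h => h.symm) tendsto_const_nhds
    -- the compact set C
    set C : Set (Cp X) := insert g (Set.range h') with hC
    have hCcompact : IsCompact C := hconv.isCompact_insert_range
    haveI : CompactSpace C := isCompact_iff_compactSpace.mp hCcompact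
    -- cluster point of (fn) in K
    have hmaple : Filter.map fn atTop ≤ Filter.principal K :=
      le_principal_iff.2 (mem_map.2 (Eventually.of_forall fun n => hFK (P n) n))
    obtain ⟨f, hfK, hcl⟩ := hK.exists_mapClusterPt hmaple
    -- f (h' n) → f g
    have hfc : Tendsto (fun n => f (h' n)) atTop (𝓝 (f g)) :=
      (f.continuous.tendsto g).comp hconv
    have hev : ∀ᶠ n in atTop, |f (h' n) - f g| < ε / 4 := by
      have := Metric.tendsto_nhds.mp hfc (ε / 4) (by positivity)
      filter_upwards [this] with n hn
      rwa [Real.dist_eq] at hn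
    -- the compact-open neighborhood via restriction to C
    set ρ : C(Cp X, ℝ) → C(C, ℝ) := fun u => u.restrict C with hρdef
    have hρcont : Continuous ρ := ContinuousMap.continuous_restrict C
    have hNopen : IsOpen (ρ ⁻¹' Metric.ball (ρ f) (ε / 8)) :=
      Metric.isOpen_ball.preimage hρcont
    have hfN : f ∈ ρ ⁻¹' Metric.ball (ρ f) (ε / 8) := by
      simp only [Set.mem_preimage]
      exact Metric.mem_ball_self (by positivity)
    have hfreq : ∃ᶠ n in atTop, fn n ∈ ρ ⁻¹' Metric.ball (ρ f) (ε / 8) :=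
      (mapClusterPt_iff_frequently.mp hcl) _ (hNopen.mem_nhds hfN)
    obtain ⟨n, hnN, hnev⟩ := (hfreq.and_eventually hev).exists
    -- final estimates
    have h1 : ε ≤ |fn n (hn n) - fn n g| := hbig (P n) n
    have h2 : |fn n (h' n) - fn n (hn n)| < ε / 4 := by
      refine hBf (P n) n (h' n) ?_
      intro x hx
      rw [hh'B n x hx]
      simpa [hn] using hδfpos (P n) n
    have hpt : ∀ y : C, |fn n y.1 - f y.1| < ε / 8 := by
      have hball : dist (ρ (fn n)) (ρ f) < ε / 8 := Metric.mem_ball.mp hnN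
      have := (ContinuousMap.dist_lt_iff (by positivity)).mp hball
      intro y
      have h3 := this y
      rw [hρdef] at h3
      simpa [ContinuousMap.restrict_apply, Real.dist_eq] using h3
    have e1 : |fn n (h' n) - f (h' n)| < ε / 8 := hpt ⟨h' n, Or.inr ⟨n, rfl⟩⟩
    have e2 : |fn n g - f g| < ε / 8 := hpt ⟨g, Or.inl rfl⟩
    have e3 : |f (h' n) - f g| < ε / 4 := hnev
    -- combine
    have t1 : |fn n (hn n) - fn n g| ≤ |fn n (hn n) - fn n (h' n)| +
        |fn n (h' n) - f (h' n)| + |f (h' n) - f g| + |f g - fn n g| := by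
      have a1 : |fn n (hn n) - fn n g| ≤ |fn n (hn n) - f (h' n)| + |f (h' n) - fn n g| :=
        abs_sub_le _ _ _
      have a2 : |fn n (hn n) - f (h' n)| ≤ |fn n (hn n) - fn n (h' n)| +
          |fn n (h' n) - f (h' n)| := abs_sub_le _ _ _
      have a3 : |f (h' n) - fn n g| ≤ |f (h' n) - f g| + |f g - fn n g| := abs_sub_le _ _ _
      linarith
    have h2' : |fn n (hn n) - fn n (h' n)| < ε / 4 := by rwa [abs_sub_comm]
    have e2' : |f g - fn n g| < ε / 8 := by rwa [abs_sub_comm]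
    linarith
  -- equicontinuity implies continuity of the evaluation map
  rw [continuous_iff_continuousAt]
  rintro ⟨g, f₀⟩
  have : Tendsto (fun p : Cp X × K => (p.2 : C(Cp X, ℝ)) p.1) (𝓝 (g, f₀))
      (𝓝 ((f₀ : C(Cp X, ℝ)) g)) := by
    rw [Metric.tendsto_nhds]
    intro ε hε
    obtain ⟨V, hVmem, hV⟩ := equi g (ε / 2) (by positivity)
    have hWmem : {q : K | |(q : C(Cp X, ℝ)) g - (f₀ : C(Cp X, ℝ)) g| < ε / 2} ∈ 𝓝 f₀ := by
      have hc : Continuous fun q : K => (q : C(Cp X, ℝ)) g :=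
        (continuous_eval_const g).comp continuous_subtype_val
      refine (isOpen_lt ((hc.sub continuous_const).abs) continuous_const).mem_nhds ?_
      simp only [Set.mem_setOf_eq, sub_self, abs_zero]
      simpa using div_pos hε (by norm_num : (0:ℝ) < 2)
    filter_upwards [prod_mem_nhds hVmem hWmem] with p hp
    have hq1 := hV (p.2 : C(Cp X, ℝ)) p.2.2 p.1 hp.1
    have hq2 := hp.2
    rw [Real.dist_eq]
    calc |(p.2 : C(Cp X, ℝ)) p.1 - (f₀ : C(Cp X, ℝ)) g|
        ≤ |(p.2 : C(Cp X, ℝ)) p.1 - (p.2 : C(Cp X, ℝ)) g| +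
          |(p.2 : C(Cp X, ℝ)) g - (f₀ : C(Cp X, ℝ)) g| := abs_sub_le _ _ _
      _ < ε / 2 + ε / 2 := add_lt_add hq1 hq2
      _ = ε := by ring
  exact this
end

section
/- Let X be a Tychonoff space admitting a family {U_i : i ∈ I} of open sets, points a_i ∈ U_i for each i ∈ I, and a point z ∈ X such that: every compact subset of X meets only finitely many U_i, and z is a cluster point of the set {a_i : i ∈ I}. Then X is not an Ascoli space. -/
open Topology Filter

theorem stmt15 {X : Type*} [TopologicalSpace X] [T35Space X] {I : Type*}
    (U : I → Set X) (hUopen : ∀ i, IsOpen (U i))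
    (a : I → X) (ha : ∀ i, a i ∈ U i)
    (hfin : ∀ C : Set X, IsCompact C → {i : I | (C ∩ U i).Nonempty}.Finite)
    (z : X) (hz : AccPt z (Filter.principal (Set.range a))) :
    ¬IsAscoli X := by
  -- Choose Urysohn-type functions via complete regularity
  have hsep : ∀ i, ∃ f : C(X, ℝ), f (a i) = 1 ∧ ∀ x ∉ U i, f x = 0 := by
    intro i
    obtain ⟨f, fc, hf0, hf1⟩ := CompletelyRegularSpace.completely_regular (a i) (U i)ᶜ
      (hUopen i).isClosed_compl (by simp [ha i])
    refine ⟨⟨fun x => 1 - (f x : ℝ), by fun_prop⟩, ?_, ?_⟩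
    · simp [hf0]
    · intro x hx
      have : f x = 1 := hf1 hx
      simp [this]
  choose g hg1 hg0 using hsep
  have htend : Filter.Tendsto g Filter.cofinite (𝓝 0) := by
    rw [ContinuousMap.tendsto_iff_forall_isCompact_tendstoUniformlyOn]
    intro C hC
    have hev : ∀ᶠ i in Filter.cofinite, ∀ x ∈ C, g i x = 0 := by
      have := (hfin C hC).compl_mem_cofinite
      filter_upwards [this] with i hi x hx
      refine hg0 i x fun hxU => hi ⟨x, hx, hxU⟩
    intro u hu
    filter_upwards [hev] with i hi x hx
    have : g i x = 0 := hi x hx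
    simpa [this] using refl_mem_uniformity hu
  have hK : IsCompact (insert (0 : C(X, ℝ)) (Set.range g)) :=
    htend.isCompact_insert_range_of_cofinite
  intro hA
  have hcont := hA _ hK
  set K : Set C(X, ℝ) := insert 0 (Set.range g) with hKdef
  have h0K : (0 : C(X, ℝ)) ∈ K := Set.mem_insert _ _
  have hCA : ContinuousAt (fun p : X × K => (p.2 : C(X, ℝ)) p.1) (z, ⟨0, h0K⟩) :=
    hcont.continuousAt
  have hval : (fun p : X × K => (p.2 : C(X, ℝ)) p.1) (z, ⟨0, h0K⟩) = 0 := rfl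
  have hmem : {p : X × K | (p.2 : C(X, ℝ)) p.1 < 1 / 2} ∈ 𝓝 ((z, ⟨0, h0K⟩) : X × K) := by
    have : Set.Iio ((1 : ℝ) / 2) ∈ 𝓝 (0 : ℝ) := Iio_mem_nhds (by norm_num)
    have := hCA this
    exact this
  obtain ⟨V, hV, W, hW, hVW⟩ := mem_nhds_prod_iff.mp hmem
  rw [nhds_subtype] at hW
  obtain ⟨W', hW', hW'sub⟩ := hW
  -- the set of bad indices is finite
  have hB : {i : I | g i ∉ W'}.Finite := by
    have := htend hW'
    exact Filter.mem_cofinite.mp this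
  have hT : IsClosed ((a '' {i : I | g i ∉ W'}) \ {z}) :=
    ((hB.image a).subset Set.diff_subset).isClosed
  have hV' : V ∩ ((a '' {i : I | g i ∉ W'}) \ {z})ᶜ ∈ 𝓝 z := by
    refine Filter.inter_mem hV (hT.isOpen_compl.mem_nhds ?_)
    simp
  obtain ⟨y, ⟨hyV, hy⟩, hyne⟩ := accPt_iff_nhds.mp hz _ hV'
  obtain ⟨hyV1, hyV2⟩ := hyV
  obtain ⟨j, rfl⟩ := hy
  have hjgood : g j ∈ W' := by
    by_contra hbad
    exact hyV2 ⟨⟨j, hbad, rfl⟩, hyne⟩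
  have hgjK : g j ∈ K := Set.mem_insert_of_mem _ ⟨j, rfl⟩
  have hWmem : (⟨g j, hgjK⟩ : K) ∈ W := hW'sub hjgood
  have : ((a j, ⟨g j, hgjK⟩) : X × K) ∈ {p : X × K | (p.2 : C(X, ℝ)) p.1 < 1 / 2} :=
    hVW ⟨hyV1, hWmem⟩
  simp only [Set.mem_setOf_eq] at this
  rw [hg1 j] at this
  norm_num at this
end

section
/- Every paracompact locally pseudocompact Hausdorff space is locally compact. -/
open Topology Filter

/-- A subspace is pseudocompact if every continuous real-valued function on it is
bounded. -/
def IsPseudocompact {X : Type*} [TopologicalSpace X] (s : Set X) : Prop :=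
  ∀ f : s → ℝ, Continuous f → ∃ M : ℝ, ∀ y : s, |f y| ≤ M

/-- A pseudocompact paracompact Hausdorff space is compact. -/
lemma compactSpace_of_pseudocompact {Y : Type*} [TopologicalSpace Y] [T2Space Y]
    [ParacompactSpace Y] (h : ∀ f : Y → ℝ, Continuous f → ∃ M : ℝ, ∀ y, |f y| ≤ M) :
    CompactSpace Y := by
  constructor
  rw [isCompact_iff_finite_subcover]
  intro ι U hUo hUc
  obtain ⟨v, hvo, hvc, hvlf, hvU⟩ := precise_refinement U hUo (Set.univ_subset_iff.mp hUc)
  by_cases hS : {i | (v i).Nonempty}.Finite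
  · refine ⟨hS.toFinset, fun x _ => ?_⟩
    have hx : x ∈ ⋃ i, v i := hvc ▸ Set.mem_univ x
    obtain ⟨i, hi⟩ := Set.mem_iUnion.mp hx
    exact Set.mem_iUnion₂.mpr ⟨i, hS.mem_toFinset.mpr ⟨x, hi⟩, hvU i hi⟩
  · exfalso
    have hSinf : {i | (v i).Nonempty}.Infinite := hS
    set e := hSinf.natEmbedding with he
    have hiinj : Function.Injective fun n => (e n : ι) :=
      Subtype.val_injective.comp e.injective
    have hmem : ∀ n : ℕ, (v (e n : ι)).Nonempty := fun n => (e n).2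
    choose x hx using hmem
    -- Urysohn functions
    have hury : ∀ n : ℕ, ∃ f : C(Y, ℝ), Set.EqOn f 0 (v (e n : ι))ᶜ ∧ Set.EqOn f 1 {x n} ∧
        ∀ y, f y ∈ Set.Icc (0:ℝ) 1 := by
      intro n
      exact exists_continuous_zero_one_of_isClosed (isClosed_compl_iff.mpr (hvo _))
        isClosed_singleton (by
          rw [Set.disjoint_singleton_right]
          exact fun hc => hc (hx n))
    choose f hf0 hf1 hf01 using hury
    set g : ℕ → Y → ℝ := fun n y => (n : ℝ) * f n y with hg
    have hgsupp : ∀ n, Function.support (g n) ⊆ v (e n : ι) := by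
      intro n y hy
      by_contra hc
      exact hy (by simp [hg, hf0 n hc])
    have hglf : LocallyFinite fun n => Function.support (g n) :=
      (hvlf.comp_injective hiinj).subset hgsupp
    have hgnonneg : ∀ n y, 0 ≤ g n y := fun n y =>
      mul_nonneg (Nat.cast_nonneg n) (hf01 n y).1
    set F : Y → ℝ := fun y => ∑ᶠ n, g n y with hF
    have hFcont : Continuous F := by
      refine continuous_finsum (fun n => ?_) hglf
      exact continuous_const.mul (f n).continuous
    obtain ⟨M, hM⟩ := h F hFcont
    set n := ⌈M⌉₊ + 1 with hn
    have hsuppfin : (Function.support fun m => g m (x n)).Finite := by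
      refine Set.Finite.subset ((hvlf.comp_injective hiinj).point_finite (x n)) ?_
      intro m hm
      exact hgsupp m hm
    have hle : g n (x n) ≤ F (x n) :=
      single_le_finsum n hsuppfin fun m => hgnonneg m (x n)
    have hgn : g n (x n) = n := by
      have : f n (x n) = 1 := hf1 n rfl
      simp [hg, this]
    have h1 : (n : ℝ) ≤ M := by
      calc (n : ℝ) = g n (x n) := hgn.symm
        _ ≤ F (x n) := hle
        _ ≤ |F (x n)| := le_abs_self _
        _ ≤ M := hM _
    have h2 : M < n := by
      calc M ≤ (⌈M⌉₊ : ℝ) := Nat.le_ceil M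
        _ < n := by exact_mod_cast Nat.lt_succ_self _
    exact absurd h1 (not_le.mpr h2)

theorem stmt16 {X : Type*} [TopologicalSpace X] [T2Space X] [ParacompactSpace X]
    (h : ∀ x : X, ∃ U : Set X, IsOpen U ∧ x ∈ U ∧ IsPseudocompact (closure U)) :
    LocallyCompactSpace X := by
  have hweak : WeaklyLocallyCompactSpace X := by
    constructor
    intro x
    obtain ⟨U, hUo, hxU, hp⟩ := h x
    have : ParacompactSpace (closure U) :=
      isClosed_closure.isClosedEmbedding_subtypeVal.paracompactSpace
    have hcs : CompactSpace (closure U) := compactSpace_of_pseudocompact hp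
    exact ⟨closure U, isCompact_iff_compactSpace.mpr hcs,
      mem_of_superset (hUo.mem_nhds hxU) subset_closure⟩
  infer_instance
end

section
/- If X is a paracompact Hausdorff space that is not Lindelöf, then ω^{ω₁} (the product of ω₁ copies of the countable discrete space ω) embeds into C_k(X) as a closed subspace. -/
open Topology Filter Set

lemma natCast_pi_isInducing' {T : Type*} :
    IsInducing (fun (n : T → ℕ) (α : T) => (n α : ℝ)) := by
  constructor
  simp only [Pi.topologicalSpace, induced_iInf, induced_compose]
  refine iInf_congr fun α => ?_
  rw [Nat.isClosedEmbedding_coe_real.isInducing.eq_induced, induced_compose]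
  rfl

lemma exists_transfinite_points' {X ι : Type*} (v : ι → Set X)
    (hvU : ⋃ i, v i = univ)
    (hcover : ∀ s : Set ι, s.Countable → (⋃ i ∈ s, v i) ≠ univ)
    {T : Type*} [LinearOrder T] [WellFoundedLT T]
    (hcount : ∀ α : T, (Set.Iio α).Countable) :
    ∃ (x : T → X) (i : T → ι), (∀ α, x α ∈ v (i α)) ∧
      ∀ α β, β < α → x α ∉ v (i β) := by
  classical
  have key : ∀ (α : T) (g : ∀ β : T, β < α → X × ι), ∃ q : X × ι,
      q.1 ∈ v q.2 ∧ ∀ β (h : β < α), q.1 ∉ v (g β h).2 := by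
    intro α g
    have hc : Countable (Set.Iio α) := (hcount α).to_subtype
    set s : Set ι := Set.range (fun β : Set.Iio α => (g β.1 β.2).2) with hs
    have hsc : s.Countable := Set.countable_range _
    have hne := hcover s hsc
    obtain ⟨x0, hx0⟩ : ∃ x0, x0 ∉ ⋃ i ∈ s, v i := by
      by_contra h
      push_neg at h
      exact hne (Set.eq_univ_of_forall h)
    obtain ⟨i0, hi0⟩ : ∃ i0, x0 ∈ v i0 := by
      have : x0 ∈ ⋃ i, v i := hvU ▸ Set.mem_univ x0
      rwa [Set.mem_iUnion] at this
    refine ⟨(x0, i0), hi0, fun β h hb => hx0 ?_⟩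
    exact Set.mem_biUnion ⟨⟨β, h⟩, rfl⟩ hb
  let p : T → X × ι := fun α =>
    WellFounded.fix (wellFounded_lt) (fun α IH => (key α IH).choose) α
  have hp : ∀ α, p α = (key α (fun β _ => p β)).choose := fun α =>
    WellFounded.fix_eq _ _ α
  refine ⟨fun α => (p α).1, fun α => (p α).2, fun α => ?_, fun α β h => ?_⟩
  · have := (key α (fun β _ => p β)).choose_spec.1
    rwa [← hp α] at this
  · have := (key α (fun β _ => p β)).choose_spec.2 β h
    rwa [← hp α] at this

theorem stmt17 {X : Type*} [TopologicalSpace X] [T2Space X] [ParacompactSpace X]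
    (hnl : ¬LindelofSpace X) (J : Type) (hJ : Cardinal.mk J = Cardinal.aleph 1) :
    ∃ e : (J → ℕ) → C(X, ℝ), IsClosedEmbedding e := by
  classical
  -- Step 1: an open cover with no countable subcover
  have hnc : ¬ ∀ (ι : Type _) (U : ι → Set X), (∀ i, IsOpen (U i)) →
      (univ : Set X) ⊆ ⋃ i, U i →
      ∃ t : Set ι, t.Countable ∧ (univ : Set X) ⊆ ⋃ i ∈ t, U i := by
    intro h
    exact hnl ⟨isLindelof_iff_countable_subcover.mpr (fun {ι} U => h ι U)⟩
  push_neg at hnc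
  obtain ⟨ι, u, huo, hucov, hsub⟩ := hnc
  -- Step 2: precise locally finite refinement
  obtain ⟨v, hvo, hvcov, hvlf, hvsub⟩ :=
    precise_refinement u huo (univ_subset_iff.mp hucov)
  have hvnc : ∀ s : Set ι, s.Countable → (⋃ i ∈ s, v i) ≠ univ := by
    intro s hs h
    refine hsub s hs ?_
    calc (univ : Set X) = ⋃ i ∈ s, v i := h.symm
      _ ⊆ ⋃ i ∈ s, u i := Set.iUnion₂_mono fun i _ => hvsub i
  -- Step 3: the index type of size ℵ₁
  set T := (Cardinal.aleph 1).ord.ToType with hTdef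
  have hT : Cardinal.mk T = Cardinal.aleph 1 := Cardinal.mk_ord_toType _
  obtain ⟨eJ⟩ : Nonempty (J ≃ T) := Cardinal.eq.mp (hJ.trans hT.symm)
  have hcount : ∀ α : T, (Set.Iio α).Countable := fun α =>
    (Cardinal.countable_iff_lt_aleph_one _).mpr (Cardinal.mk_Iio_ord_toType α)
  obtain ⟨x, i, hxv, hxnot⟩ := exists_transfinite_points' v hvcov hvnc hcount
  -- injectivity
  have hinj_i : Function.Injective i := by
    intro a b hab
    by_contra hne
    rcases lt_or_gt_of_ne hne with h | h
    · exact hxnot b a h (hab ▸ hxv b)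
    · exact hxnot a b h (hab ▸ hxv a)
  have hinj_x : Function.Injective x := by
    intro a b hab
    by_contra hne
    rcases lt_or_gt_of_ne hne with h | h
    · exact hxnot b a h (hab ▸ hxv a)
    · exact hxnot a b h (hab ▸ hxv b)
  have hWlf : LocallyFinite (fun α => v (i α)) := hvlf.comp_injective hinj_i
  -- every image of x is closed
  have hclosed : ∀ S : Set T, IsClosed (x '' S) := by
    intro S
    rw [← isOpen_compl_iff, isOpen_iff_mem_nhds]
    intro y hy
    obtain ⟨N, hN, hNf⟩ := hWlf y
    have hfin : (x '' ({α | (v (i α) ∩ N).Nonempty} ∩ S)).Finite :=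
      (hNf.inter_of_left S).image x
    have hyc : (x '' ({α | (v (i α) ∩ N).Nonempty} ∩ S))ᶜ ∈ 𝓝 y := by
      refine hfin.isClosed.isOpen_compl.mem_nhds ?_
      intro hmem
      exact hy (Set.image_mono Set.inter_subset_right hmem)
    filter_upwards [hN, hyc] with z hz1 hz2
    intro hzS
    obtain ⟨β, hβS, rfl⟩ := hzS
    exact hz2 ⟨β, ⟨⟨x β, hxv β, hz1⟩, hβS⟩, rfl⟩
  -- bump functions
  set G : T → Set X := fun α => v (i α) \ x '' {β | β ≠ α} with hGdef
  have hGopen : ∀ α, IsOpen (G α) := fun α => (hvo _).sdiff (hclosed _)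
  have hxG : ∀ α, x α ∈ G α := by
    intro α
    refine ⟨hxv α, ?_⟩
    rintro ⟨β, hβ, hβeq⟩
    exact hβ (hinj_x hβeq)
  have hbump : ∀ α, ∃ f : C(X, ℝ), Set.EqOn f 0 (G α)ᶜ ∧ Set.EqOn f 1 {x α} ∧
      ∀ z, f z ∈ Set.Icc (0:ℝ) 1 := by
    intro α
    exact exists_continuous_zero_one_of_isClosed (hGopen α).isClosed_compl
      isClosed_singleton (Set.disjoint_singleton_right.mpr (fun h => h (hxG α)))
  choose f hf0 hf1 hf01 using hbump
  have hsupp : ∀ α z, z ∉ G α → f α z = 0 := fun α z hz => hf0 α hz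
  have hfx : ∀ α, f α (x α) = 1 := fun α => hf1 α rfl
  have hdelta : ∀ α β, β ≠ α → f α (x β) = 0 := by
    intro α β h
    exact hsupp α (x β) (fun hG => hG.2 ⟨β, h, rfl⟩)
  have hsupp_sub : ∀ (c : T → ℝ) (z : X),
      (Function.support fun α => c α * f α z) ⊆ {α | z ∈ v (i α)} := by
    intro c z α hα
    by_contra hc
    have : f α z = 0 := hsupp α z (fun hG => hc hG.1)
    simp [this] at hα
  -- continuity of the uncurried sum
  have hcont : Continuous fun p : (T → ℕ) × X => ∑ᶠ α, (p.1 α : ℝ) * f α p.2 := by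
    rw [continuous_iff_continuousAt]
    rintro ⟨n₀, z₀⟩
    obtain ⟨N, hN, hNf⟩ := hWlf z₀
    have hEq : ∀ p : (T → ℕ) × X, p.2 ∈ N →
        (∑ᶠ α, (p.1 α : ℝ) * f α p.2) = ∑ α ∈ hNf.toFinset, (p.1 α : ℝ) * f α p.2 := by
      intro p hp
      apply finsum_eq_sum_of_support_subset
      intro α hα
      have hin : p.2 ∈ v (i α) := hsupp_sub _ _ hα
      rw [Set.Finite.coe_toFinset]
      exact ⟨p.2, hin, hp⟩
    have hC : ContinuousAt (fun p : (T → ℕ) × X =>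
        ∑ α ∈ hNf.toFinset, (p.1 α : ℝ) * f α p.2) (n₀, z₀) := by
      apply Continuous.continuousAt
      apply continuous_finset_sum
      intro α _
      exact (continuous_of_discreteTopology.comp
        ((continuous_apply α).comp continuous_fst)).mul
        ((f α).continuous.comp continuous_snd)
    refine hC.congr ?_
    have hmem : (Set.univ ×ˢ N) ∈ 𝓝 ((n₀, z₀) : (T → ℕ) × X) :=
      prod_mem_nhds univ_mem hN
    filter_upwards [hmem] with p hp using (hEq p hp.2).symm
  have hFc : ∀ n : T → ℕ, Continuous fun z => ∑ᶠ α, (n α : ℝ) * f α z := by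
    intro n
    exact hcont.comp (continuous_const.prodMk continuous_id)
  set E : (T → ℕ) → C(X, ℝ) := fun n => ⟨fun z => ∑ᶠ α, (n α : ℝ) * f α z, hFc n⟩
    with hEdef
  have hEc : Continuous E := ContinuousMap.continuous_of_continuous_uncurry _ hcont
  -- evaluation identity
  have hEval : ∀ (n : T → ℕ) (β : T), E n (x β) = (n β : ℝ) := by
    intro n β
    have hss : (Function.support fun α => (n α : ℝ) * f α (x β)) ⊆
        (({β} : Finset T) : Set T) := by
      intro α hα
      simp only [Finset.coe_singleton, Set.mem_singleton_iff]
      by_contra h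
      have : f α (x β) = 0 := hdelta α β (fun hh => h hh.symm)
      simp [this] at hα
    show (∑ᶠ α, (n α : ℝ) * f α (x β)) = (n β : ℝ)
    rw [finsum_eq_sum_of_support_subset _ hss, Finset.sum_singleton, hfx β, mul_one]
  -- the left inverse via evaluation
  have hr : Continuous fun (g : C(X, ℝ)) (β : T) => g (x β) :=
    continuous_pi fun β => continuous_eval_const (x β)
  have hcomp : (fun (g : C(X, ℝ)) (β : T) => g (x β)) ∘ E
      = fun (n : T → ℕ) (β : T) => ((n β : ℝ)) := by
    funext n β
    exact hEval n β
  have hind : IsInducing E :=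
    IsInducing.of_comp hEc hr (hcomp ▸ natCast_pi_isInducing')
  have hinjE : Function.Injective E := by
    intro a b h
    funext β
    have h2 : E a (x β) = E b (x β) := by rw [h]
    rw [hEval, hEval] at h2
    exact_mod_cast h2
  -- closed range
  have hrange : IsClosed (Set.range E) := by
    have hrEq : Set.range E =
        (⋂ β : T, {g : C(X, ℝ) | g (x β) ∈ Set.range ((↑) : ℕ → ℝ)}) ∩
        ⋂ z : X, {g : C(X, ℝ) |
          g z = ∑ α ∈ (hWlf.point_finite z).toFinset, g (x α) * f α z} := by
      apply Set.Subset.antisymm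
      · rintro _ ⟨n, rfl⟩
        constructor
        · exact Set.mem_iInter.mpr fun β => ⟨n β, (hEval n β).symm⟩
        · refine Set.mem_iInter.mpr fun z => ?_
          show (∑ᶠ α, (n α : ℝ) * f α z) = _
          rw [finsum_eq_sum_of_support_subset (s := (hWlf.point_finite z).toFinset)]
          · apply Finset.sum_congr rfl
            intro α _
            rw [hEval]
          · intro α hα
            rw [Set.Finite.coe_toFinset]
            exact hsupp_sub _ _ hα
      · rintro g ⟨hg1, hg2⟩
        rw [Set.mem_iInter] at hg1
        rw [Set.mem_iInter] at hg2
        choose n hn using hg1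
        refine ⟨n, ?_⟩
        ext z
        show (∑ᶠ α, (n α : ℝ) * f α z) = g z
        rw [finsum_eq_sum_of_support_subset (s := (hWlf.point_finite z).toFinset)]
        · rw [hg2 z]
          apply Finset.sum_congr rfl
          intro α _
          rw [hn α]
        · intro α hα
          rw [Set.Finite.coe_toFinset]
          exact hsupp_sub _ _ hα
    rw [hrEq]
    apply IsClosed.inter
    · exact isClosed_iInter fun β =>
        Nat.isClosedEmbedding_coe_real.isClosed_range.preimage
          (continuous_eval_const (x β))
    · refine isClosed_iInter fun z => ?_
      exact isClosed_eq (continuous_eval_const z)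
        (continuous_finset_sum _ fun α _ =>
          (continuous_eval_const (x α)).mul continuous_const)
  have hCE : IsClosedEmbedding E := ⟨⟨hind, hinjE⟩, hrange⟩
  let φ : (J → ℕ) ≃ₜ (T → ℕ) := Homeomorph.piCongrLeft (Y := fun _ => ℕ) eJ
  exact ⟨E ∘ φ, hCE.comp φ.isClosedEmbedding⟩
end
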